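/- arXiv:1905.06719 — 6 statements merged into one kernel-verified Lean document; each statement's English description precedes it below -/
import Mathlib

section
/- Let (ℋ,ξ) be a pointed N–M correspondence in J_h(𝔑,𝔐). Then the linear functional ω_{(ℋ,ξ)} on N ⊙ M^op linearly extending ω_{(ℋ,ξ)}(x ⊗ y^op) = ⟨x ξ y, ξ⟩_ℋ is a joining of 𝔑 and 𝔐. -/
open scoped InnerProductSpace ComplexInnerProductSpace ComplexOrder
open Filter

noncomputable section

/-- A `W*`-dynamical system `(M, φ, α, G)`, presented in standard form: a von Neumann
algebra `M` acting on the GNS Hilbert space `H = L²(M, φ)` of a faithful normal state `φ`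
(so `Ω` is the canonical cyclic and separating unit vector and `φ x = ⟪Ω, x Ω⟫`), together
with the canonical strongly continuous unitary group `U` implementing a `φ`-preserving
action of `G` on `M`, the modular unitary group `Δ` (`t ↦ Δ_φ^{it}`) implementing the
modular automorphism group `σ_t^φ`, and the opposite-algebra embedding
`opp : x ↦ xᵒᵖ = J x* J` onto the commutant `M'`. -/
structure WStar (G : Type) [Group G] [TopologicalSpace G]
    (H : Type) [NormedAddCommGroup H] [InnerProductSpace ℂ H] [CompleteSpace H] where
  M : VonNeumannAlgebra H
  separable : TopologicalSpace.SeparableSpace H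
  Ω : H
  normΩ : ‖Ω‖ = 1
  cyclic : Dense {ξ : H | ∃ x ∈ M, x Ω = ξ}
  separating : ∀ x ∈ M, x Ω = 0 → x = 0
  U : G → H →L[ℂ] H
  U_unitary : ∀ g, U g ∈ unitary (H →L[ℂ] H)
  U_one : U 1 = 1
  U_mul : ∀ g h, U (g * h) = U g * U h
  U_Ω : ∀ g, U g Ω = Ω
  U_mem : ∀ g, ∀ x ∈ M, U g * x * star (U g) ∈ M
  U_cont : ∀ ξ : H, Continuous fun g => U g ξ
  Δ : ℝ → H →L[ℂ] H
  Δ_unitary : ∀ t, Δ t ∈ unitary (H →L[ℂ] H)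
  Δ_zero : Δ 0 = 1
  Δ_add : ∀ s t, Δ (s + t) = Δ s * Δ t
  Δ_Ω : ∀ t, Δ t Ω = Ω
  Δ_mem : ∀ t, ∀ x ∈ M, Δ t * x * star (Δ t) ∈ M
  Δ_cont : ∀ ξ : H, Continuous fun t => Δ t ξ
  U_Δ_comm : ∀ g t, U g * Δ t = Δ t * U g
  opp : (H →L[ℂ] H) →ₗ[ℂ] (H →L[ℂ] H)
  opp_one : opp 1 = 1
  opp_mul : ∀ x ∈ M, ∀ y ∈ M, opp (x * y) = opp y * opp x
  opp_star : ∀ x ∈ M, opp (star x) = star (opp x)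
  opp_commute : ∀ x ∈ M, ∀ y ∈ M, Commute x (opp y)
  opp_inner : ∀ x ∈ M, ∀ y ∈ M, ⟪opp x Ω, opp y Ω⟫_ℂ = ⟪star y Ω, star x Ω⟫_ℂ

namespace WStar

variable {G : Type} [Group G] [TopologicalSpace G]
variable {H : Type} [NormedAddCommGroup H] [InnerProductSpace ℂ H] [CompleteSpace H]

/-- The faithful normal state of the system. -/
def state (𝔑 : WStar G H) (x : H →L[ℂ] H) : ℂ := ⟪𝔑.Ω, x 𝔑.Ω⟫_ℂ

/-- The action of `g ∈ G` on the algebra, `α_g = Ad(U g)`. -/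
def act (𝔑 : WStar G H) (g : G) (x : H →L[ℂ] H) : H →L[ℂ] H := 𝔑.U g * x * star (𝔑.U g)

/-- The modular automorphism group, `σ_t = Ad(Δ^{it})`. -/
def mod (𝔑 : WStar G H) (t : ℝ) (x : H →L[ℂ] H) : H →L[ℂ] H := 𝔑.Δ t * x * star (𝔑.Δ t)

/-- Ergodicity: the fixed point algebra is trivial. -/
def Ergodic (𝔑 : WStar G H) : Prop :=
  ∀ x ∈ 𝔑.M, (∀ g : G, 𝔑.act g x = x) → ∃ c : ℂ, x = c • (1 : H →L[ℂ] H)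

/-- Weak mixing of a system. -/
def WeaklyMixing (𝔑 : WStar G H) : Prop :=
  ∀ ε : ℝ, 0 < ε → ∀ F : Finset (H →L[ℂ] H), (∀ x ∈ F, x ∈ 𝔑.M ∧ 𝔑.state x = 0) →
    ∃ g : G, ∀ x ∈ F, ∀ y ∈ F, ‖𝔑.state (𝔑.act g x * y)‖ < ε

/-- Compactness of a system: every orbit `{α_g(x) Ω}` is totally bounded in the GNS norm. -/
def IsCompactSystem (𝔑 : WStar G H) : Prop :=
  ∀ x ∈ 𝔑.M, TotallyBounded (Set.range fun g : G => (𝔑.act g x) 𝔑.Ω)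

end WStar

/-- Normality (σ-weak continuity) of a map defined on a von Neumann algebra with underlying
set `S`, expressed as weak-operator-to-weak-operator continuity along norm-bounded nets. -/
def IsNormalOn {H K : Type} [NormedAddCommGroup H] [InnerProductSpace ℂ H] [CompleteSpace H]
    [NormedAddCommGroup K] [InnerProductSpace ℂ K] [CompleteSpace K]
    (Φ : (H →L[ℂ] H) → (K →L[ℂ] K)) (S : Set (H →L[ℂ] H)) : Prop :=
  ∀ (ι : Type) (l : Filter ι) (x : ι → H →L[ℂ] H) (x₀ : H →L[ℂ] H) (C : ℝ),
    (∀ i, x i ∈ S) → x₀ ∈ S → (∀ i, ‖x i‖ ≤ C) →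
    (∀ ξ η : H, Tendsto (fun i => ⟪ξ, x i η⟫_ℂ) l (nhds ⟪ξ, x₀ η⟫_ℂ)) →
    ∀ ξ η : K, Tendsto (fun i => ⟪ξ, Φ (x i) η⟫_ℂ) l (nhds ⟪ξ, Φ x₀ η⟫_ℂ)

/-- An element of `J_m(𝔑, 𝔐)`: a `G`-equivariant `(ρ, φ)`-Markov map, i.e. a unital
completely positive map `Φ : N → M` with `φ ∘ Φ = ρ`, `Φ ∘ σ_t^ρ = σ_t^φ ∘ Φ` and
`Φ ∘ α_g = β_g ∘ Φ`.  (The map is recorded as a function on all of `B(H)`; only its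
values on `N = 𝔑.M` are constrained, and only those values are ever used.) -/
structure Markov {G : Type} [Group G] [TopologicalSpace G]
    {H K : Type} [NormedAddCommGroup H] [InnerProductSpace ℂ H] [CompleteSpace H]
    [NormedAddCommGroup K] [InnerProductSpace ℂ K] [CompleteSpace K]
    (𝔑 : WStar G H) (𝔐 : WStar G K) where
  Φ : (H →L[ℂ] H) → (K →L[ℂ] K)
  map_add : ∀ x ∈ 𝔑.M, ∀ y ∈ 𝔑.M, Φ (x + y) = Φ x + Φ y
  map_smul : ∀ (c : ℂ), ∀ x ∈ 𝔑.M, Φ (c • x) = c • Φ x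
  mapsTo : ∀ x ∈ 𝔑.M, Φ x ∈ 𝔐.M
  unital : Φ 1 = 1
  cp : ∀ (n : ℕ) (x : Fin n → H →L[ℂ] H), (∀ i, x i ∈ 𝔑.M) →
    ∀ ξ : Fin n → K, 0 ≤ ∑ i, ∑ l, ⟪ξ i, Φ (star (x i) * x l) (ξ l)⟫_ℂ
  statePres : ∀ x ∈ 𝔑.M, 𝔐.state (Φ x) = 𝔑.state x
  modularEq : ∀ (t : ℝ), ∀ x ∈ 𝔑.M, Φ (𝔑.mod t x) = 𝔐.mod t (Φ x)
  equivariant : ∀ (g : G), ∀ x ∈ 𝔑.M, Φ (𝔑.act g x) = 𝔐.act g (Φ x)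

/-- An element of `J_s(𝔑, 𝔐)`: a joining, i.e. a state `ω` on the algebraic tensor
product `N ⊙ M^op` whose marginals are the two given states and which is invariant under
the doubled group action and the doubled modular flow.  Since such a state is determined
by its values on elementary tensors, it is recorded as the bilinear functional
`ω x y = ω(x ⊗ yᵒᵖ)`; positivity is the statement `ω(z* z) ≥ 0` for
`z = ∑ x i ⊗ (y i)ᵒᵖ`. -/
structure Joining {G : Type} [Group G] [TopologicalSpace G]
    {H K : Type} [NormedAddCommGroup H] [InnerProductSpace ℂ H] [CompleteSpace H]
    [NormedAddCommGroup K] [InnerProductSpace ℂ K] [CompleteSpace K]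
    (𝔑 : WStar G H) (𝔐 : WStar G K) where
  ω : (H →L[ℂ] H) →ₗ[ℂ] (K →L[ℂ] K) →ₗ[ℂ] ℂ
  positive : ∀ (n : ℕ) (x : Fin n → H →L[ℂ] H) (y : Fin n → K →L[ℂ] K),
    (∀ i, x i ∈ 𝔑.M) → (∀ i, y i ∈ 𝔐.M) →
    0 ≤ ∑ i, ∑ l, ω (star (x i) * x l) (y l * star (y i))
  marginal_left : ∀ x ∈ 𝔑.M, ω x 1 = 𝔑.state x
  marginal_right : ∀ y ∈ 𝔐.M, ω 1 y = 𝔐.state y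
  equivariant : ∀ g : G, ∀ x ∈ 𝔑.M, ∀ y ∈ 𝔐.M, ω (𝔑.act g x) (𝔐.act g y) = ω x y
  modular : ∀ t : ℝ, ∀ x ∈ 𝔑.M, ∀ y ∈ 𝔐.M, ω (𝔑.mod t x) (𝔐.mod t y) = ω x y

/-- A `W*`-dynamical system bundled with its underlying Hilbert space. -/
structure SystemOn (G : Type) [Group G] [TopologicalSpace G] where
  carrier : Type
  [i1 : NormedAddCommGroup carrier]
  [i2 : InnerProductSpace ℂ carrier]
  [i3 : CompleteSpace carrier]
  sys : WStar G carrier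

attribute [instance] SystemOn.i1 SystemOn.i2 SystemOn.i3


/-- An element of `J_h(𝔑, 𝔐)`: a pointed `N`–`M` correspondence `(ℋ, ξ)` (two commuting
binormal actions with distinguished unit cyclic vector) such that (1) the exchange maps
`x ξ ↦ x Ω_ρ` and `ξ y ↦ Ω_φ y` are well defined and extend to Hilbert module
isomorphisms of the closures of `N ξ` resp. `ξ M` onto `L²(N, ρ)` resp. `L²(M, φ)`
(equivalently, they are isometric on generators, which is recorded here), and (2) the
doubled action and doubled modular flow induce strongly continuous unitary
representations `Π` of `G` and `T` of `ℝ`. -/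
structure PointedCorr {G : Type} [Group G] [TopologicalSpace G] [IsTopologicalGroup G]
    [LocallyCompactSpace G] [TopologicalSpace.SeparableSpace G]
    {H : Type} [NormedAddCommGroup H] [InnerProductSpace ℂ H] [CompleteSpace H]
    {K : Type} [NormedAddCommGroup K] [InnerProductSpace ℂ K] [CompleteSpace K]
    (𝔑 : WStar G H) (𝔐 : WStar G K) where
  /-- the underlying Hilbert space -/
  X : Type
  [nacg : NormedAddCommGroup X]
  [ips : InnerProductSpace ℂ X]
  [cpl : CompleteSpace X]
  /-- the left action of `N` -/
  πl : (H →L[ℂ] H) → X →L[ℂ] X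
  /-- the right action of `M` (equivalently, the representation of `M^op`) -/
  πr : (K →L[ℂ] K) → X →L[ℂ] X
  /-- the distinguished unit cyclic vector -/
  ξ : X
  norm_ξ : ‖ξ‖ = 1
  πl_one : πl 1 = 1
  πl_add : ∀ x ∈ 𝔑.M, ∀ x' ∈ 𝔑.M, πl (x + x') = πl x + πl x'
  πl_smul : ∀ (c : ℂ), ∀ x ∈ 𝔑.M, πl (c • x) = c • πl x
  πl_mul : ∀ x ∈ 𝔑.M, ∀ x' ∈ 𝔑.M, πl (x * x') = πl x * πl x'
  πl_star : ∀ x ∈ 𝔑.M, πl (star x) = star (πl x)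
  πr_one : πr 1 = 1
  πr_add : ∀ y ∈ 𝔐.M, ∀ y' ∈ 𝔐.M, πr (y + y') = πr y + πr y'
  πr_smul : ∀ (c : ℂ), ∀ y ∈ 𝔐.M, πr (c • y) = c • πr y
  πr_mul : ∀ y ∈ 𝔐.M, ∀ y' ∈ 𝔐.M, πr (y * y') = πr y' * πr y
  πr_star : ∀ y ∈ 𝔐.M, πr (star y) = star (πr y)
  commutes : ∀ x ∈ 𝔑.M, ∀ y ∈ 𝔐.M, Commute (πl x) (πr y)
  cyclic : Dense (↑(Submodule.span ℂ {w : X | ∃ x ∈ 𝔑.M, ∃ y ∈ 𝔐.M, πl x (πr y ξ) = w}) : Set X)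
  πl_normal : IsNormalOn πl (𝔑.M : Set (H →L[ℂ] H))
  πr_normal : IsNormalOn πr (𝔐.M : Set (K →L[ℂ] K))
  /-- the left exchange map `x ξ ↦ x Ω_ρ` is well defined and isometric -/
  exchange_left : ∀ x ∈ 𝔑.M, ‖πl x ξ‖ = ‖x 𝔑.Ω‖
  /-- the right exchange map `ξ y ↦ Ω_φ y` is well defined and isometric -/
  exchange_right : ∀ y ∈ 𝔐.M, ‖πr y ξ‖ = ‖𝔐.opp y 𝔐.Ω‖
  /-- the unitary representation `Π` of `G` induced by the doubled action -/
  Pi : G → X →L[ℂ] X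
  Pi_unitary : ∀ g, Pi g ∈ unitary (X →L[ℂ] X)
  Pi_mul : ∀ g h, Pi (g * h) = Pi g * Pi h
  Pi_spec : ∀ (g : G), ∀ x ∈ 𝔑.M, ∀ y ∈ 𝔐.M,
    Pi g (πl x (πr y ξ)) = πl (𝔑.act g x) (πr (𝔐.act g y) ξ)
  Pi_cont : ∀ w : X, Continuous fun g => Pi g w
  /-- the unitary representation `T` of `ℝ` induced by the doubled modular flow -/
  T : ℝ → X →L[ℂ] X
  T_unitary : ∀ t, T t ∈ unitary (X →L[ℂ] X)
  T_add : ∀ s t, T (s + t) = T s * T t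
  T_spec : ∀ (t : ℝ), ∀ x ∈ 𝔑.M, ∀ y ∈ 𝔐.M,
    T t (πl x (πr y ξ)) = πl (𝔑.mod t x) (πr (𝔐.mod t y) ξ)
  T_cont : ∀ w : X, Continuous fun t => T t w

attribute [instance] PointedCorr.nacg PointedCorr.ips PointedCorr.cpl


/-- Polarization: equal norms of the four combinations give equal inner products. -/
lemma inner_eq_of_norms {X Y : Type*} [NormedAddCommGroup X] [InnerProductSpace ℂ X]
    [NormedAddCommGroup Y] [InnerProductSpace ℂ Y] (u v : X) (a b : Y)
    (h1 : ‖u + v‖ = ‖a + b‖) (h2 : ‖u - v‖ = ‖a - b‖)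
    (h3 : ‖u - (RCLike.I : ℂ) • v‖ = ‖a - (RCLike.I : ℂ) • b‖)
    (h4 : ‖u + (RCLike.I : ℂ) • v‖ = ‖a + (RCLike.I : ℂ) • b‖) :
    ⟪u, v⟫_ℂ = ⟪a, b⟫_ℂ := by
  rw [inner_eq_sum_norm_sq_div_four, inner_eq_sum_norm_sq_div_four, h1, h2, h3, h4]

/-- **Theorem (a pointed correspondence in `J_h` gives a joining).** Let `(ℋ, ξ)` be a
pointed `N`–`M` correspondence in `J_h(𝔑, 𝔐)`.  Then the linear functional on `N ⊙ M^op`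
extending `x ⊗ yᵒᵖ ↦ ⟨x ξ y, ξ⟩_ℋ` is a joining of `𝔑` and `𝔐`. -/
theorem joining_from_bimodule {G : Type} [Group G] [TopologicalSpace G] [IsTopologicalGroup G]
    [LocallyCompactSpace G] [TopologicalSpace.SeparableSpace G]
    {H : Type} [NormedAddCommGroup H] [InnerProductSpace ℂ H] [CompleteSpace H]
    {K : Type} [NormedAddCommGroup K] [InnerProductSpace ℂ K] [CompleteSpace K]
    (𝔑 : WStar G H) (𝔐 : WStar G K) (C : PointedCorr 𝔑 𝔐) :
    ∃ j : Joining 𝔑 𝔐, ∀ x ∈ 𝔑.M, ∀ y ∈ 𝔐.M,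
      j.ω x y = ⟪C.ξ, C.πl x (C.πr y C.ξ)⟫_ℂ := by
  classical
  obtain ⟨NS', hNc⟩ :=
    Submodule.exists_isCompl (Subalgebra.toSubmodule 𝔑.M.toStarSubalgebra.toSubalgebra)
  obtain ⟨MS', hMc⟩ :=
    Submodule.exists_isCompl (Subalgebra.toSubmodule 𝔐.M.toStarSubalgebra.toSubalgebra)
  set NS := Subalgebra.toSubmodule 𝔑.M.toStarSubalgebra.toSubalgebra with hNS
  set MS := Subalgebra.toSubmodule 𝔐.M.toStarSubalgebra.toSubalgebra with hMS
  let projN : (H →L[ℂ] H) →ₗ[ℂ] NS := NS.linearProjOfIsCompl NS' hNc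
  let projM : (K →L[ℂ] K) →ₗ[ℂ] MS := MS.linearProjOfIsCompl MS' hMc
  let f0 : NS →ₗ[ℂ] MS →ₗ[ℂ] ℂ := LinearMap.mk₂ ℂ
    (fun x y => ⟪C.ξ, C.πl x (C.πr y C.ξ)⟫_ℂ)
    (fun x x' y => by
      show ⟪C.ξ, C.πl (↑(x + x')) (C.πr ↑y C.ξ)⟫_ℂ = _
      rw [Submodule.coe_add, C.πl_add _ x.2 _ x'.2]
      simp [inner_add_right])
    (fun c x y => by
      show ⟪C.ξ, C.πl (↑(c • x)) (C.πr ↑y C.ξ)⟫_ℂ = _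
      rw [Submodule.coe_smul, C.πl_smul c _ x.2]
      simp [inner_smul_right])
    (fun x y y' => by
      show ⟪C.ξ, C.πl ↑x (C.πr (↑(y + y')) C.ξ)⟫_ℂ = _
      rw [Submodule.coe_add, C.πr_add _ y.2 _ y'.2]
      simp [inner_add_right])
    (fun c x y => by
      show ⟪C.ξ, C.πl ↑x (C.πr (↑(c • y)) C.ξ)⟫_ℂ = _
      rw [Submodule.coe_smul, C.πr_smul c _ y.2]
      simp [inner_smul_right])
  let ω : (H →L[ℂ] H) →ₗ[ℂ] (K →L[ℂ] K) →ₗ[ℂ] ℂ := f0.compl₁₂ projN projM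
  have spec : ∀ x, x ∈ 𝔑.M → ∀ y, y ∈ 𝔐.M →
      ω x y = ⟪C.ξ, C.πl x (C.πr y C.ξ)⟫_ℂ := by
    intro x hx y hy
    have h1 : projN x = ⟨x, hx⟩ :=
      Submodule.linearProjOfIsCompl_apply_left hNc ⟨x, hx⟩
    have h2 : projM y = ⟨y, hy⟩ :=
      Submodule.linearProjOfIsCompl_apply_left hMc ⟨y, hy⟩
    show f0 (projN x) (projM y) = _
    rw [h1, h2]
    rfl
  -- inner-product preservation by unitaries
  have uni : ∀ (u : C.X →L[ℂ] C.X), u ∈ unitary (C.X →L[ℂ] C.X) →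
      ∀ a b : C.X, ⟪u a, u b⟫_ℂ = ⟪a, b⟫_ℂ := by
    intro u hu a b
    rw [← ContinuousLinearMap.adjoint_inner_right, ← ContinuousLinearMap.star_eq_adjoint,
      ← ContinuousLinearMap.mul_apply, Unitary.star_mul_self_of_mem hu,
      ContinuousLinearMap.one_apply]
  -- combined linearity of πl on 𝔑.M and πr on 𝔐.M
  have πl_comb : ∀ (c d : ℂ), ∀ a, a ∈ 𝔑.M → ∀ b, b ∈ 𝔑.M →
      c • C.πl a C.ξ + d • C.πl b C.ξ = C.πl (c • a + d • b) C.ξ := by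
    intro c d a ha b hb
    rw [C.πl_add _ (𝔑.M.toStarSubalgebra.smul_mem ha c) _ (𝔑.M.toStarSubalgebra.smul_mem hb d),
      C.πl_smul c a ha, C.πl_smul d b hb]
    simp
  have πr_comb : ∀ (c d : ℂ), ∀ a, a ∈ 𝔐.M → ∀ b, b ∈ 𝔐.M →
      c • C.πr a C.ξ + d • C.πr b C.ξ = C.πr (c • a + d • b) C.ξ := by
    intro c d a ha b hb
    rw [C.πr_add _ (𝔐.M.toStarSubalgebra.smul_mem ha c) _ (𝔐.M.toStarSubalgebra.smul_mem hb d),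
      C.πr_smul c a ha, C.πr_smul d b hb]
    simp
  have normL : ∀ (c d : ℂ), ∀ a, a ∈ 𝔑.M → ∀ b, b ∈ 𝔑.M →
      ‖c • C.πl a C.ξ + d • C.πl b C.ξ‖ = ‖c • a 𝔑.Ω + d • b 𝔑.Ω‖ := by
    intro c d a ha b hb
    rw [πl_comb c d a ha b hb, C.exchange_left _
      (add_mem (𝔑.M.toStarSubalgebra.smul_mem ha c) (𝔑.M.toStarSubalgebra.smul_mem hb d))]
    simp
  have normR : ∀ (c d : ℂ), ∀ a, a ∈ 𝔐.M → ∀ b, b ∈ 𝔐.M →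
      ‖c • C.πr a C.ξ + d • C.πr b C.ξ‖ = ‖c • 𝔐.opp a 𝔐.Ω + d • 𝔐.opp b 𝔐.Ω‖ := by
    intro c d a ha b hb
    rw [πr_comb c d a ha b hb, C.exchange_right _
      (add_mem (𝔐.M.toStarSubalgebra.smul_mem ha c) (𝔐.M.toStarSubalgebra.smul_mem hb d))]
    simp
  have polL : ∀ a, a ∈ 𝔑.M → ∀ b, b ∈ 𝔑.M →
      ⟪C.πl a C.ξ, C.πl b C.ξ⟫_ℂ = ⟪a 𝔑.Ω, b 𝔑.Ω⟫_ℂ := by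
    intro a ha b hb
    apply inner_eq_of_norms
    · simpa using normL 1 1 a ha b hb
    · simpa [sub_eq_add_neg] using normL 1 (-1) a ha b hb
    · simpa [sub_eq_add_neg] using normL 1 (-(RCLike.I : ℂ)) a ha b hb
    · simpa using normL 1 (RCLike.I : ℂ) a ha b hb
  have polR : ∀ a, a ∈ 𝔐.M → ∀ b, b ∈ 𝔐.M →
      ⟪C.πr a C.ξ, C.πr b C.ξ⟫_ℂ = ⟪𝔐.opp a 𝔐.Ω, 𝔐.opp b 𝔐.Ω⟫_ℂ := by
    intro a ha b hb
    apply inner_eq_of_norms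
    · simpa using normR 1 1 a ha b hb
    · simpa [sub_eq_add_neg] using normR 1 (-1) a ha b hb
    · simpa [sub_eq_add_neg] using normR 1 (-(RCLike.I : ℂ)) a ha b hb
    · simpa using normR 1 (RCLike.I : ℂ) a ha b hb
  refine ⟨⟨ω, ?_, ?_, ?_, ?_, ?_⟩, spec⟩
  · -- positivity
    intro n x y hx hy
    set v : Fin n → C.X := fun i => C.πl (x i) (C.πr (y i) C.ξ) with hv
    have hterm : ∀ i l, ω (star (x i) * x l) (y l * star (y i)) = ⟪v i, v l⟫_ℂ := by
      intro i l
      rw [spec _ (mul_mem (star_mem (hx i)) (hx l)) _ (mul_mem (hy l) (star_mem (hy i)))]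
      rw [C.πl_mul _ (star_mem (hx i)) _ (hx l), C.πl_star _ (hx i),
        C.πr_mul _ (hy l) _ (star_mem (hy i)), C.πr_star _ (hy i)]
      have hc : Commute (C.πl (x l)) (star (C.πr (y i))) := by
        have := C.commutes (x l) (hx l) (star (y i)) (star_mem (hy i))
        rwa [C.πr_star _ (hy i)] at this
      have hcl : C.πl (x l) (star (C.πr (y i)) (C.πr (y l) C.ξ)) =
          star (C.πr (y i)) (C.πl (x l) (C.πr (y l) C.ξ)) := by
        rw [← ContinuousLinearMap.mul_apply, ← ContinuousLinearMap.mul_apply, hc.eq]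
        rfl
      simp only [ContinuousLinearMap.mul_apply, hcl]
      rw [ContinuousLinearMap.star_eq_adjoint, ContinuousLinearMap.adjoint_inner_right,
        ContinuousLinearMap.star_eq_adjoint, ContinuousLinearMap.adjoint_inner_right]
      have : C.πr (y i) (C.πl (x i) C.ξ) = C.πl (x i) (C.πr (y i) C.ξ) := by
        rw [← ContinuousLinearMap.mul_apply, ← ContinuousLinearMap.mul_apply,
          ← (C.commutes (x i) (hx i) (y i) (hy i)).eq]
      rw [this]
    calc (0 : ℂ) ≤ ⟪∑ i, v i, ∑ i, v i⟫_ℂ := by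
          rw [Complex.nonneg_iff]
          refine ⟨by simpa using (inner_self_nonneg (𝕜 := ℂ) (x := ∑ i, v i)), ?_⟩
          exact (RCLike.im_to_complex ▸ inner_self_im (𝕜 := ℂ) (∑ i, v i)).symm
      _ = ∑ i, ∑ l, ω (star (x i) * x l) (y l * star (y i)) := by
          rw [sum_inner]
          refine Finset.sum_congr rfl fun i _ => ?_
          rw [inner_sum]
          exact Finset.sum_congr rfl fun l _ => (hterm i l).symm
  · -- marginal_left
    intro x hx
    rw [spec x hx 1 (one_mem _), C.πr_one]
    calc ⟪C.ξ, C.πl x ((1 : C.X →L[ℂ] C.X) C.ξ)⟫_ℂ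
        = ⟪C.πl 1 C.ξ, C.πl x C.ξ⟫_ℂ := by rw [C.πl_one]; simp
      _ = ⟪(1 : H →L[ℂ] H) 𝔑.Ω, x 𝔑.Ω⟫_ℂ := polL 1 (one_mem _) x hx
      _ = 𝔑.state x := by simp [WStar.state]
  · -- marginal_right
    intro y hy
    rw [spec 1 (one_mem _) y hy, C.πl_one]
    calc ⟪C.ξ, (1 : C.X →L[ℂ] C.X) (C.πr y C.ξ)⟫_ℂ
        = ⟪C.πr 1 C.ξ, C.πr y C.ξ⟫_ℂ := by rw [C.πr_one]; simp
      _ = ⟪𝔐.opp 1 𝔐.Ω, 𝔐.opp y 𝔐.Ω⟫_ℂ := polR 1 (one_mem _) y hy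
      _ = ⟪star y 𝔐.Ω, star (1 : K →L[ℂ] K) 𝔐.Ω⟫_ℂ := 𝔐.opp_inner 1 (one_mem _) y hy
      _ = ⟪star y 𝔐.Ω, 𝔐.Ω⟫_ℂ := by rw [star_one]; simp
      _ = ⟪𝔐.Ω, y 𝔐.Ω⟫_ℂ := by
          rw [ContinuousLinearMap.star_eq_adjoint, ContinuousLinearMap.adjoint_inner_left]
      _ = 𝔐.state y := rfl
  · -- equivariance
    intro g x hx y hy
    have hxm : 𝔑.act g x ∈ 𝔑.M := 𝔑.U_mem g x hx
    have hym : 𝔐.act g y ∈ 𝔐.M := 𝔐.U_mem g y hy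
    rw [spec _ hxm _ hym, spec x hx y hy, ← C.Pi_spec g x hx y hy]
    have hact1N : 𝔑.act g 1 = 1 := by
      show 𝔑.U g * 1 * star (𝔑.U g) = 1
      rw [mul_one, Unitary.mul_star_self_of_mem (𝔑.U_unitary g)]
    have hact1M : 𝔐.act g 1 = 1 := by
      show 𝔐.U g * 1 * star (𝔐.U g) = 1
      rw [mul_one, Unitary.mul_star_self_of_mem (𝔐.U_unitary g)]
    have hξ : C.Pi g C.ξ = C.ξ := by
      have h := C.Pi_spec g 1 (one_mem _) 1 (one_mem _)
      rw [hact1N, hact1M, C.πl_one, C.πr_one] at h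
      simpa using h
    calc ⟪C.ξ, C.Pi g (C.πl x (C.πr y C.ξ))⟫_ℂ
        = ⟪C.Pi g C.ξ, C.Pi g (C.πl x (C.πr y C.ξ))⟫_ℂ := by rw [hξ]
      _ = ⟪C.ξ, C.πl x (C.πr y C.ξ)⟫_ℂ := uni _ (C.Pi_unitary g) _ _
  · -- modular invariance
    intro t x hx y hy
    have hxm : 𝔑.mod t x ∈ 𝔑.M := 𝔑.Δ_mem t x hx
    have hym : 𝔐.mod t y ∈ 𝔐.M := 𝔐.Δ_mem t y hy
    rw [spec _ hxm _ hym, spec x hx y hy, ← C.T_spec t x hx y hy]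
    have hact1N : 𝔑.mod t 1 = 1 := by
      show 𝔑.Δ t * 1 * star (𝔑.Δ t) = 1
      rw [mul_one, Unitary.mul_star_self_of_mem (𝔑.Δ_unitary t)]
    have hact1M : 𝔐.mod t 1 = 1 := by
      show 𝔐.Δ t * 1 * star (𝔐.Δ t) = 1
      rw [mul_one, Unitary.mul_star_self_of_mem (𝔐.Δ_unitary t)]
    have hξ : C.T t C.ξ = C.ξ := by
      have h := C.T_spec t 1 (one_mem _) 1 (one_mem _)
      rw [hact1N, hact1M, C.πl_one, C.πr_one] at h
      simpa using h
    calc ⟪C.ξ, C.T t (C.πl x (C.πr y C.ξ))⟫_ℂ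
        = ⟪C.T t C.ξ, C.T t (C.πl x (C.πr y C.ξ))⟫_ℂ := by rw [hξ]
      _ = ⟪C.ξ, C.πl x (C.πr y C.ξ)⟫_ℂ := uni _ (C.T_unitary t) _ _


end
end

section
/- The correspondences ω ↦ Φ_ω (sending a joining to its associated equivariant Markov map) and Φ ↦ ω_Φ (sending an equivariant Markov map to its associated joining) are mutually inverse bijections between J_s(𝔑,𝔐) and J_m(𝔑,𝔐): for all ω ∈ J_s(𝔑,𝔐) one has ω_{Φ_ω} = ω, and for all Φ ∈ J_m(𝔑,𝔐) one has Φ_{ω_Φ} = Φ. -/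
open scoped InnerProductSpace ComplexInnerProductSpace ComplexOrder
open Filter

noncomputable section

/-- The GNS representation of a joining `ω ∈ J_s(𝔑, 𝔐)`: a pointed `N`–`M` correspondence
`(ℋ_ω, ξ_ω)` whose inner products of generators are given by `ω`. -/
structure GNSRepCore {G : Type} [Group G] [TopologicalSpace G] [IsTopologicalGroup G]
    [LocallyCompactSpace G] [TopologicalSpace.SeparableSpace G]
    {H : Type} [NormedAddCommGroup H] [InnerProductSpace ℂ H] [CompleteSpace H]
    {K : Type} [NormedAddCommGroup K] [InnerProductSpace ℂ K] [CompleteSpace K]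
    (𝔑 : WStar G H) (𝔐 : WStar G K) (j : Joining 𝔑 𝔐) where
  /-- the underlying Hilbert space -/
  X : Type
  [nacg : NormedAddCommGroup X]
  [ips : InnerProductSpace ℂ X]
  [cpl : CompleteSpace X]
  /-- the left action of `N` -/
  πl : (H →L[ℂ] H) → X →L[ℂ] X
  /-- the right action of `M` (equivalently, the representation of `M^op`) -/
  πr : (K →L[ℂ] K) → X →L[ℂ] X
  /-- the distinguished unit cyclic vector -/
  ξ : X
  norm_ξ : ‖ξ‖ = 1
  πl_one : πl 1 = 1
  πl_add : ∀ x ∈ 𝔑.M, ∀ x' ∈ 𝔑.M, πl (x + x') = πl x + πl x'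
  πl_smul : ∀ (c : ℂ), ∀ x ∈ 𝔑.M, πl (c • x) = c • πl x
  πl_mul : ∀ x ∈ 𝔑.M, ∀ x' ∈ 𝔑.M, πl (x * x') = πl x * πl x'
  πl_star : ∀ x ∈ 𝔑.M, πl (star x) = star (πl x)
  πr_one : πr 1 = 1
  πr_add : ∀ y ∈ 𝔐.M, ∀ y' ∈ 𝔐.M, πr (y + y') = πr y + πr y'
  πr_smul : ∀ (c : ℂ), ∀ y ∈ 𝔐.M, πr (c • y) = c • πr y
  πr_mul : ∀ y ∈ 𝔐.M, ∀ y' ∈ 𝔐.M, πr (y * y') = πr y' * πr y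
  πr_star : ∀ y ∈ 𝔐.M, πr (star y) = star (πr y)
  commutes : ∀ x ∈ 𝔑.M, ∀ y ∈ 𝔐.M, Commute (πl x) (πr y)
  cyclic : Dense (↑(Submodule.span ℂ {w : X | ∃ x ∈ 𝔑.M, ∃ y ∈ 𝔐.M, πl x (πr y ξ) = w}) : Set X)
  πl_normal : IsNormalOn πl (𝔑.M : Set (H →L[ℂ] H))
  πr_normal : IsNormalOn πr (𝔐.M : Set (K →L[ℂ] K))
  /-- `(ℋ_ω, ξ_ω)` represents the joining `ω` via GNS -/
  gns : ∀ x ∈ 𝔑.M, ∀ y ∈ 𝔐.M, ⟪ξ, πl x (πr y ξ)⟫_ℂ = j.ω x y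

attribute [instance] GNSRepCore.nacg GNSRepCore.ips GNSRepCore.cpl

/-- The completely positive map `Φ_ω = R* π_N(·) R : N → M` associated to a joining `ω`,
where `R : L²(M, φ) → ℋ_ω` is the (co-restricted) right exchange map `Ω_φ y ↦ ξ_ω y`. -/
def markovOf {G : Type} [Group G] [TopologicalSpace G] [IsTopologicalGroup G]
    [LocallyCompactSpace G] [TopologicalSpace.SeparableSpace G]
    {H : Type} [NormedAddCommGroup H] [InnerProductSpace ℂ H] [CompleteSpace H]
    {K : Type} [NormedAddCommGroup K] [InnerProductSpace ℂ K] [CompleteSpace K]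
    {𝔑 : WStar G H} {𝔐 : WStar G K} {j : Joining 𝔑 𝔐}
    (C : GNSRepCore 𝔑 𝔐 j) (R : K →L[ℂ] C.X) : (H →L[ℂ] H) → (K →L[ℂ] K) :=
  fun x => (ContinuousLinearMap.adjoint R) ∘L (C.πl x) ∘L R

/-- **Theorem (the correspondences `ω ↦ Φ_ω` and `Φ ↦ ω_Φ` are mutually inverse).**
With `Φ_ω = R* π_N(·) R` built from the GNS representation of a joining `ω` via the right
exchange map `R`, and with `ω_Φ(x ⊗ yᵒᵖ) = ⟨Φ(x) Ω_φ y, Ω_φ⟩`: for every joining `ω` one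
has `ω_{Φ_ω} = ω` (first conjunct), and for every `Φ ∈ J_m(𝔑, 𝔐)` one has
`Φ_{ω_Φ} = Φ` (second conjunct). -/
theorem joining_markov_mutually_inverse {G : Type} [Group G] [TopologicalSpace G] [IsTopologicalGroup G]
    [LocallyCompactSpace G] [TopologicalSpace.SeparableSpace G]
    {H : Type} [NormedAddCommGroup H] [InnerProductSpace ℂ H] [CompleteSpace H]
    {K : Type} [NormedAddCommGroup K] [InnerProductSpace ℂ K] [CompleteSpace K]
    (𝔑 : WStar G H) (𝔐 : WStar G K) (j : Joining 𝔑 𝔐) (C : GNSRepCore 𝔑 𝔐 j)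
    (R : K →L[ℂ] C.X)
    (hR_spec : ∀ y ∈ 𝔐.M, R (𝔐.opp y 𝔐.Ω) = C.πr y C.ξ)
    (hR_isometry : ∀ v : K, ‖R v‖ = ‖v‖)
    (hR_range : Set.range (fun v => R v) = closure {w : C.X | ∃ y ∈ 𝔐.M, C.πr y C.ξ = w}) :
    (∀ x ∈ 𝔑.M, ∀ y ∈ 𝔐.M,
      ⟪𝔐.Ω, markovOf C R x (𝔐.opp y 𝔐.Ω)⟫_ℂ = j.ω x y) ∧
    (∀ Φ : Markov 𝔑 𝔐,
      (∀ x ∈ 𝔑.M, ∀ y ∈ 𝔐.M, j.ω x y = ⟪𝔐.Ω, Φ.Φ x (𝔐.opp y 𝔐.Ω)⟫_ℂ) →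
      ∀ x ∈ 𝔑.M, markovOf C R x = Φ.Φ x) := by
  -- `R Ω = ξ`
  have hRΩ : R 𝔐.Ω = C.ξ := by
    have h1 := hR_spec 1 (one_mem 𝔐.M)
    rw [𝔐.opp_one, C.πr_one] at h1
    simpa using h1
  -- first conjunct
  have key : ∀ x ∈ 𝔑.M, ∀ y ∈ 𝔐.M,
      ⟪𝔐.Ω, markovOf C R x (𝔐.opp y 𝔐.Ω)⟫_ℂ = j.ω x y := by
    intro x hx y hy
    simp only [markovOf, ContinuousLinearMap.comp_apply]
    rw [ContinuousLinearMap.adjoint_inner_right, hRΩ, hR_spec y hy, C.gns x hx y hy]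
  refine ⟨key, ?_⟩
  -- density of `{opp y Ω : y ∈ M}` in `K`
  have hD : Dense {v : K | ∃ y ∈ 𝔐.M, 𝔐.opp y 𝔐.Ω = v} := by
    rw [Metric.dense_iff]
    intro v r hr
    have hv : R v ∈ closure {w : C.X | ∃ y ∈ 𝔐.M, C.πr y C.ξ = w} := by
      rw [← hR_range]; exact ⟨v, rfl⟩
    rw [Metric.mem_closure_iff] at hv
    obtain ⟨w, ⟨y, hy, hw⟩, hdist⟩ := hv r hr
    refine ⟨𝔐.opp y 𝔐.Ω, ?_, ⟨y, hy, rfl⟩⟩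
    rw [Metric.mem_ball, dist_eq_norm]
    have hRw : R (𝔐.opp y 𝔐.Ω) = w := by rw [hR_spec y hy, hw]
    calc ‖𝔐.opp y 𝔐.Ω - v‖ = ‖R (𝔐.opp y 𝔐.Ω - v)‖ := (hR_isometry _).symm
      _ = ‖w - R v‖ := by rw [map_sub, hRw]
      _ = dist (R v) w := by rw [← dist_eq_norm, dist_comm]
      _ < r := hdist
  intro Φ hΦ x hx
  -- matrix coefficients agree on the dense set
  have heq : ∀ y ∈ 𝔐.M, ∀ y' ∈ 𝔐.M,
      ⟪𝔐.opp y' 𝔐.Ω, markovOf C R x (𝔐.opp y 𝔐.Ω)⟫_ℂ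
        = ⟪𝔐.opp y' 𝔐.Ω, Φ.Φ x (𝔐.opp y 𝔐.Ω)⟫_ℂ := by
    intro y hy y' hy'
    have hsy' : star y' ∈ 𝔐.M := star_mem hy'
    have hyy' : y * star y' ∈ 𝔐.M := mul_mem hy hsy'
    have lhs : ⟪𝔐.opp y' 𝔐.Ω, markovOf C R x (𝔐.opp y 𝔐.Ω)⟫_ℂ
        = j.ω x (y * star y') := by
      simp only [markovOf, ContinuousLinearMap.comp_apply]
      rw [ContinuousLinearMap.adjoint_inner_right, hR_spec y hy, hR_spec y' hy']
      have hcomm := C.commutes x hx (star y') hsy'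
      have hmul := C.πr_mul y hy (star y') hsy'
      calc ⟪C.πr y' C.ξ, C.πl x (C.πr y C.ξ)⟫_ℂ
          = ⟪C.ξ, (ContinuousLinearMap.adjoint (C.πr y'))
              (C.πl x (C.πr y C.ξ))⟫_ℂ := by
            rw [ContinuousLinearMap.adjoint_inner_right]
        _ = ⟪C.ξ, C.πr (star y') (C.πl x (C.πr y C.ξ))⟫_ℂ := by
            rw [← ContinuousLinearMap.star_eq_adjoint, ← C.πr_star y' hy']
        _ = ⟪C.ξ, C.πl x (C.πr (star y') (C.πr y C.ξ))⟫_ℂ := by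
            have h := DFunLike.congr_fun hcomm (C.πr y C.ξ)
            simp only [ContinuousLinearMap.mul_apply] at h
            rw [← h]
        _ = ⟪C.ξ, C.πl x (C.πr (y * star y') C.ξ)⟫_ℂ := by
            rw [hmul]; simp [ContinuousLinearMap.mul_apply]
        _ = j.ω x (y * star y') := C.gns x hx _ hyy'
    have rhs : ⟪𝔐.opp y' 𝔐.Ω, Φ.Φ x (𝔐.opp y 𝔐.Ω)⟫_ℂ = j.ω x (y * star y') := by
      have hΦx := Φ.mapsTo x hx
      have hcomm := 𝔐.opp_commute (Φ.Φ x) hΦx (star y') hsy'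
      have hmul := 𝔐.opp_mul y hy (star y') hsy'
      calc ⟪𝔐.opp y' 𝔐.Ω, Φ.Φ x (𝔐.opp y 𝔐.Ω)⟫_ℂ
          = ⟪𝔐.Ω, (ContinuousLinearMap.adjoint (𝔐.opp y'))
              (Φ.Φ x (𝔐.opp y 𝔐.Ω))⟫_ℂ := by
            rw [ContinuousLinearMap.adjoint_inner_right]
        _ = ⟪𝔐.Ω, 𝔐.opp (star y') (Φ.Φ x (𝔐.opp y 𝔐.Ω))⟫_ℂ := by
            rw [← ContinuousLinearMap.star_eq_adjoint, ← 𝔐.opp_star y' hy']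
        _ = ⟪𝔐.Ω, Φ.Φ x (𝔐.opp (star y') (𝔐.opp y 𝔐.Ω))⟫_ℂ := by
            have h := DFunLike.congr_fun hcomm (𝔐.opp y 𝔐.Ω)
            simp only [ContinuousLinearMap.mul_apply] at h
            rw [h]
        _ = ⟪𝔐.Ω, Φ.Φ x (𝔐.opp (y * star y') 𝔐.Ω)⟫_ℂ := by
            rw [hmul]; simp [ContinuousLinearMap.mul_apply]
        _ = j.ω x (y * star y') := (hΦ x hx _ hyy').symm
    rw [lhs, rhs]
  -- vectors agree on the dense set
  have hvec : ∀ y ∈ 𝔐.M,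
      markovOf C R x (𝔐.opp y 𝔐.Ω) = Φ.Φ x (𝔐.opp y 𝔐.Ω) := by
    intro y hy
    have hfun : (fun u : K => ⟪u, markovOf C R x (𝔐.opp y 𝔐.Ω)⟫_ℂ)
        = fun u : K => ⟪u, Φ.Φ x (𝔐.opp y 𝔐.Ω)⟫_ℂ := by
      refine Continuous.ext_on hD (continuous_id.inner continuous_const)
        (continuous_id.inner continuous_const) ?_
      rintro u ⟨y', hy', rfl⟩
      exact heq y hy y' hy'
    exact ext_inner_left ℂ fun u => congrFun hfun u
  have hfun2 : (fun v : K => markovOf C R x v) = fun v : K => Φ.Φ x v := by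
    refine Continuous.ext_on hD (markovOf C R x).continuous (Φ.Φ x).continuous ?_
    rintro v ⟨y, hy, rfl⟩
    exact hvec y hy
  exact ContinuousLinearMap.ext fun v => congrFun hfun2 v

end
end

section
/- Let Φ ∈ J_m(𝔑,𝔐). Then the map x Ω_ρ ↦ Φ(x) Ω_φ extends to a bounded operator T_Φ : L²(N,ρ) → L²(M,φ) of norm 1, and: (i) T_Φ U_g = V_g T_Φ for all g ∈ G; (ii) T_Φ Δ_ρ^{it} = Δ_φ^{it} T_Φ for all t ∈ ℝ; (iii) T_Φ intertwines the representations (g,t) ↦ U_g Δ_ρ^{it} and (g,t) ↦ V_g Δ_φ^{it} of G × ℝ. Moreover, if T_Φ = W|T_Φ| is the polar decomposition, then W satisfies the same three intertwining relations. -/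
open scoped InnerProductSpace ComplexInnerProductSpace ComplexOrder
open Filter

noncomputable section

section Helpers

variable {E F K' : Type*} [NormedAddCommGroup E] [NormedSpace ℂ E]
  [NormedAddCommGroup F] [NormedSpace ℂ F]
  [NormedAddCommGroup K'] [NormedSpace ℂ K'] [CompleteSpace K']

/-- Extension of a continuous linear map along an isometric embedding with dense range. -/
lemma exists_extension_of_denseRange (e : E →L[ℂ] F) (he : Isometry e) (hd : DenseRange e)
    (f : E →L[ℂ] K') :
    ∃ T : F →L[ℂ] K', (∀ x, T (e x) = f x) ∧
      (∀ C : ℝ, (∀ x, ‖f x‖ ≤ C * ‖x‖) → ∀ y, ‖T y‖ ≤ C * ‖y‖) ∧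
      ((∀ x, ‖f x‖ = ‖x‖) → ∀ y, ‖T y‖ = ‖y‖) := by
  refine ⟨f.extend e, fun x => f.extend_eq hd he.isUniformInducing x,
    ?_, ?_⟩
  · intro C hC y
    refine hd.induction_on y (isClosed_le ?_ ?_) fun x => ?_
    · exact ((f.extend e).continuous.norm)
    · exact (continuous_const.mul continuous_norm)
    · rw [f.extend_eq hd he.isUniformInducing x, he.norm_map_of_map_zero (map_zero e) x]
      exact hC x
  · intro hC y
    refine hd.induction_on y (isClosed_eq ?_ ?_) fun x => ?_
    · exact ((f.extend e).continuous.norm)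
    · exact continuous_norm
    · rw [f.extend_eq hd he.isUniformInducing x, he.norm_map_of_map_zero (map_zero e) x]
      exact hC x

end Helpers

set_option maxHeartbeats 1000000 in
/-- **Theorem (the `L²`-intertwiner of an equivariant Markov map and its polar part).**
Let `Φ ∈ J_m(𝔑, 𝔐)`.  Then `x Ω_ρ ↦ Φ(x) Ω_φ` extends to a bounded operator
`T_Φ : L²(N, ρ) → L²(M, φ)` of norm `1` which intertwines (i) the representations `U` and
`V` of `G`, (ii) the modular unitary groups `Δ_ρ^{it}` and `Δ_φ^{it}`, and (iii) the
representations `(g, t) ↦ U_g Δ_ρ^{it}` and `(g, t) ↦ V_g Δ_φ^{it}` of `G × ℝ`.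
Moreover, if `T_Φ = W |T_Φ|` is the polar decomposition, then `W` satisfies the same
three intertwining relations. -/

theorem markov_intertwiner {G : Type} [Group G] [TopologicalSpace G] [IsTopologicalGroup G]
    [LocallyCompactSpace G] [TopologicalSpace.SeparableSpace G]
    {H : Type} [NormedAddCommGroup H] [InnerProductSpace ℂ H] [CompleteSpace H]
    {K : Type} [NormedAddCommGroup K] [InnerProductSpace ℂ K] [CompleteSpace K]
    (𝔑 : WStar G H) (𝔐 : WStar G K) (Φ : Markov 𝔑 𝔐) :
    ∃ T : H →L[ℂ] K,
      ‖T‖ = 1 ∧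
      (∀ x ∈ 𝔑.M, T (x 𝔑.Ω) = (Φ.Φ x) 𝔐.Ω) ∧
      (∀ g : G, T ∘L 𝔑.U g = 𝔐.U g ∘L T) ∧
      (∀ t : ℝ, T ∘L 𝔑.Δ t = 𝔐.Δ t ∘L T) ∧
      (∀ (g : G) (t : ℝ), T ∘L (𝔑.U g ∘L 𝔑.Δ t) = (𝔐.U g ∘L 𝔐.Δ t) ∘L T) ∧
      ∃ (W : H →L[ℂ] K) (P : H →L[ℂ] H),
        P.IsPositive ∧
        T = W ∘L P ∧
        P ∘L P = ContinuousLinearMap.adjoint T ∘L T ∧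
        (∀ v ∈ closure (Set.range fun w => P w), ‖W v‖ = ‖v‖) ∧
        (∀ v : H, (∀ w : H, ⟪v, P w⟫_ℂ = 0) → W v = 0) ∧
        (∀ g : G, W ∘L 𝔑.U g = 𝔐.U g ∘L W) ∧
        (∀ t : ℝ, W ∘L 𝔑.Δ t = 𝔐.Δ t ∘L W) ∧
        (∀ (g : G) (t : ℝ), W ∘L (𝔑.U g ∘L 𝔑.Δ t) = (𝔐.U g ∘L 𝔐.Δ t) ∘L W) := by
  classical
  -- ## Positivity consequences of complete positivity
  have hpos1 : ∀ y ∈ 𝔑.M, ∀ ξ : K, 0 ≤ ⟪ξ, Φ.Φ (star y * y) ξ⟫_ℂ := by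
    intro y hy ξ
    simpa [Fin.sum_univ_one] using Φ.cp 1 ![y] (by intro i; fin_cases i; exact hy) ![ξ]
  have hpos2 : ∀ x ∈ 𝔑.M, ∀ ξ₀ ξ₁ : K,
      0 ≤ ⟪ξ₀, ξ₀⟫_ℂ + ⟪ξ₀, Φ.Φ x ξ₁⟫_ℂ + ⟪ξ₁, Φ.Φ (star x) ξ₀⟫_ℂ
        + ⟪ξ₁, Φ.Φ (star x * x) ξ₁⟫_ℂ := by
    intro x hx ξ₀ ξ₁
    have h := Φ.cp 2 ![1, x] (by intro i; fin_cases i; exacts [one_mem 𝔑.M, hx]) ![ξ₀, ξ₁]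
    simpa [Fin.sum_univ_two, Φ.unital, add_assoc] using h
  -- ## star preservation
  have hstar : ∀ x ∈ 𝔑.M, Φ.Φ (star x) = star (Φ.Φ x) := by
    intro x hx
    have him : ∀ ξ₀ ξ₁ : K,
        (⟪ξ₀, Φ.Φ x ξ₁⟫_ℂ).im + (⟪ξ₁, Φ.Φ (star x) ξ₀⟫_ℂ).im = 0 := by
      intro ξ₀ ξ₁
      have h := hpos2 x hx ξ₀ ξ₁
      rw [Complex.le_def] at h
      have h1 : (⟪ξ₀, ξ₀⟫_ℂ).im = 0 := by
        rw [inner_self_eq_norm_sq_to_K]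
        simp [← Complex.ofReal_pow]
      have h2 : (⟪ξ₁, Φ.Φ (star x * x) ξ₁⟫_ℂ).im = 0 := by
        have h' := hpos1 x hx ξ₁
        rw [Complex.le_def] at h'
        simpa using h'.2.symm
      have h3 := h.2
      simp only [Complex.zero_im, Complex.add_im, h1, h2, zero_add, add_zero] at h3
      linarith [h3]
    have hBA : ∀ ξ₀ ξ₁ : K,
        ⟪ξ₁, Φ.Φ (star x) ξ₀⟫_ℂ = starRingEnd ℂ ⟪ξ₀, Φ.Φ x ξ₁⟫_ℂ := by
      intro ξ₀ ξ₁
      have h1 := him ξ₀ ξ₁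
      have h2 := him ((Complex.I : ℂ) • ξ₀) ξ₁
      rw [inner_smul_left, ContinuousLinearMap.map_smul, inner_smul_right] at h2
      set A := ⟪ξ₀, Φ.Φ x ξ₁⟫_ℂ with hA
      set B := ⟪ξ₁, Φ.Φ (star x) ξ₀⟫_ℂ with hB
      simp only [Complex.mul_im, Complex.conj_re, Complex.conj_im, Complex.I_re,
        Complex.I_im] at h2
      apply Complex.ext
      · simp only [Complex.conj_re]; linarith [h2]
      · simp only [Complex.conj_im]; linarith [h1]
    have hgoal : Φ.Φ (star x) = ContinuousLinearMap.adjoint (Φ.Φ x) := by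
      ext ξ₀
      refine ext_inner_left ℂ fun ξ₁ => ?_
      rw [ContinuousLinearMap.adjoint_inner_right, hBA ξ₀ ξ₁, inner_conj_symm]
    rw [hgoal, ContinuousLinearMap.star_eq_adjoint]
  -- ## the Kadison–Schwarz inequality in GNS form
  have hSch : ∀ x ∈ 𝔑.M, ‖Φ.Φ x 𝔐.Ω‖ ≤ ‖x 𝔑.Ω‖ := by
    intro x hx
    have h := hpos2 x hx (-(Φ.Φ x 𝔐.Ω)) 𝔐.Ω
    rw [hstar x hx] at h
    have e1 : ⟪-(Φ.Φ x 𝔐.Ω), -(Φ.Φ x 𝔐.Ω)⟫_ℂ = ((‖Φ.Φ x 𝔐.Ω‖ ^ 2 : ℝ) : ℂ) := by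
      rw [inner_neg_neg, inner_self_eq_norm_sq_to_K]; norm_cast
    have e2 : ⟪-(Φ.Φ x 𝔐.Ω), Φ.Φ x 𝔐.Ω⟫_ℂ = -((‖Φ.Φ x 𝔐.Ω‖ ^ 2 : ℝ) : ℂ) := by
      rw [inner_neg_left, inner_self_eq_norm_sq_to_K]; norm_cast
    have e3 : ⟪𝔐.Ω, star (Φ.Φ x) (-(Φ.Φ x 𝔐.Ω))⟫_ℂ = -((‖Φ.Φ x 𝔐.Ω‖ ^ 2 : ℝ) : ℂ) := by
      rw [map_neg, inner_neg_right, ContinuousLinearMap.star_eq_adjoint,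
        ContinuousLinearMap.adjoint_inner_right, inner_self_eq_norm_sq_to_K]
      norm_cast
    have e4 : ⟪𝔐.Ω, Φ.Φ (star x * x) 𝔐.Ω⟫_ℂ = ((‖x 𝔑.Ω‖ ^ 2 : ℝ) : ℂ) := by
      have hmem : star x * x ∈ 𝔑.M := mul_mem (star_mem hx) hx
      have hst := Φ.statePres _ hmem
      have h5 : 𝔑.state (star x * x) = ((‖x 𝔑.Ω‖ ^ 2 : ℝ) : ℂ) := by
        unfold WStar.state
        rw [ContinuousLinearMap.mul_apply, ContinuousLinearMap.star_eq_adjoint,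
          ContinuousLinearMap.adjoint_inner_right, inner_self_eq_norm_sq_to_K]
        norm_cast
      rw [← h5, ← hst]; rfl
    rw [e1, e2, e3, e4] at h
    rw [Complex.le_def] at h
    have h6 := h.1
    simp only [Complex.add_re, Complex.neg_re, Complex.ofReal_re, Complex.zero_re] at h6
    nlinarith [norm_nonneg (Φ.Φ x 𝔐.Ω), norm_nonneg (x 𝔑.Ω)]
  -- ## construction of `T` by extension from the dense subspace `N Ω`
  let evΩ : (H →L[ℂ] H) →ₗ[ℂ] H :=
    { toFun := fun a => a 𝔑.Ω
      map_add' := fun a b => rfl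
      map_smul' := fun c a => rfl }
  let N' : Submodule ℂ (H →L[ℂ] H) :=
    Subalgebra.toSubmodule 𝔑.M.toStarSubalgebra.toSubalgebra
  have hN' : ∀ a : H →L[ℂ] H, a ∈ N' ↔ a ∈ 𝔑.M := fun a => Iff.rfl
  let e' : N' →ₗ[ℂ] H := evΩ.comp N'.subtype
  have hinj : Function.Injective e' := by
    intro a b hab
    have hmem : ((a : H →L[ℂ] H) - b) ∈ 𝔑.M := sub_mem ((hN' _).mp a.2) ((hN' _).mp b.2)
    have hz : ((a : H →L[ℂ] H) - b) 𝔑.Ω = 0 := by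
      have : (a : H →L[ℂ] H) 𝔑.Ω = (b : H →L[ℂ] H) 𝔑.Ω := hab
      simp only [ContinuousLinearMap.sub_apply, this, sub_self]
    exact Subtype.ext (sub_eq_zero.mp (𝔑.separating _ hmem hz))
  let S : Submodule ℂ H := LinearMap.range e'
  have hdS : Dense (S : Set H) := by
    have hSet : (S : Set H) = {ξ : H | ∃ x ∈ 𝔑.M, x 𝔑.Ω = ξ} := by
      ext ξ
      simp only [SetLike.mem_coe, LinearMap.mem_range, Set.mem_setOf_eq]
      constructor
      · rintro ⟨a, rfl⟩; exact ⟨a, (hN' _).mp a.2, rfl⟩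
      · rintro ⟨x, hx, rfl⟩; exact ⟨⟨x, (hN' x).mpr hx⟩, rfl⟩
    rw [hSet]; exact 𝔑.cyclic
  let ΦΩ : N' →ₗ[ℂ] K :=
    { toFun := fun a => Φ.Φ (a : H →L[ℂ] H) 𝔐.Ω
      map_add' := fun a b => by
        show Φ.Φ ((a : H →L[ℂ] H) + b) 𝔐.Ω = _
        rw [Φ.map_add _ ((hN' _).mp a.2) _ ((hN' _).mp b.2)]; rfl
      map_smul' := fun c a => by
        show Φ.Φ (c • (a : H →L[ℂ] H)) 𝔐.Ω = _
        rw [Φ.map_smul c _ ((hN' _).mp a.2)]; rfl }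
  let eqN := LinearEquiv.ofInjective e' hinj
  let f₀ : S →ₗ[ℂ] K := ΦΩ.comp (eqN.symm.toLinearMap)
  have hf₀ : ∀ a : N', f₀ (eqN a) = Φ.Φ (a : H →L[ℂ] H) 𝔐.Ω := by
    intro a
    simp only [f₀, LinearMap.comp_apply, LinearEquiv.coe_coe, LinearEquiv.symm_apply_apply]
    rfl
  have hcoe : ∀ a : N', ((eqN a : S) : H) = (a : H →L[ℂ] H) 𝔑.Ω := fun a => rfl
  have hbound : ∀ s : S, ‖f₀ s‖ ≤ 1 * ‖s‖ := by
    intro s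
    obtain ⟨a, rfl⟩ : ∃ a : N', eqN a = s := ⟨eqN.symm s, eqN.apply_symm_apply s⟩
    rw [hf₀, one_mul]
    calc ‖Φ.Φ (a : H →L[ℂ] H) 𝔐.Ω‖ ≤ ‖(a : H →L[ℂ] H) 𝔑.Ω‖ := hSch _ ((hN' _).mp a.2)
    _ = ‖eqN a‖ := by rw [← hcoe a]; rfl
  let f₀c : S →L[ℂ] K := f₀.mkContinuous 1 hbound
  have hSiso : Isometry (S.subtypeL : S →L[ℂ] H) := fun a b => rfl
  have hSdense : DenseRange (S.subtypeL : S →L[ℂ] H) := by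
    have hr : Set.range (S.subtypeL : S →L[ℂ] H) = (S : Set H) := by
      ext ξ
      constructor
      · rintro ⟨s, rfl⟩; exact s.2
      · intro hξ; exact ⟨⟨ξ, hξ⟩, rfl⟩
    show Dense (Set.range (S.subtypeL : S →L[ℂ] H))
    rw [hr]; exact hdS
  obtain ⟨T, hTap, hTbd, -⟩ := exists_extension_of_denseRange S.subtypeL hSiso hSdense f₀c
  have hTx : ∀ x ∈ 𝔑.M, T (x 𝔑.Ω) = Φ.Φ x 𝔐.Ω := by
    intro x hx
    have h1 := hTap (eqN ⟨x, (hN' x).mpr hx⟩)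
    rw [show (S.subtypeL : S →L[ℂ] H) (eqN ⟨x, (hN' x).mpr hx⟩) = x 𝔑.Ω from rfl] at h1
    rw [h1]
    exact hf₀ ⟨x, (hN' x).mpr hx⟩
  have hTΩ : T 𝔑.Ω = 𝔐.Ω := by
    have h := hTx 1 (one_mem 𝔑.M)
    rw [Φ.unital] at h
    simpa using h
  have hTnorm : ‖T‖ = 1 := by
    refine le_antisymm ?_ ?_
    · refine ContinuousLinearMap.opNorm_le_bound T zero_le_one ?_
      intro y
      exact hTbd 1 (fun s => hbound s) y
    · have h := T.le_opNorm 𝔑.Ω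
      rw [hTΩ, 𝔑.normΩ, 𝔐.normΩ, mul_one] at h
      exact h
  -- ## `T` intertwines the group representations and the modular flows
  have hfix : ∀ (u : H →L[ℂ] H), u ∈ unitary (H →L[ℂ] H) → u 𝔑.Ω = 𝔑.Ω →
      star u 𝔑.Ω = 𝔑.Ω := by
    intro u hu hufix
    conv_lhs => rw [← hufix]
    rw [← ContinuousLinearMap.comp_apply, ← ContinuousLinearMap.mul_def,
      (Unitary.mem_iff.mp hu).1, ContinuousLinearMap.one_apply]
  have hfix' : ∀ (v : K →L[ℂ] K), v ∈ unitary (K →L[ℂ] K) → v 𝔐.Ω = 𝔐.Ω →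
      star v 𝔐.Ω = 𝔐.Ω := by
    intro v hv hvfix
    conv_lhs => rw [← hvfix]
    rw [← ContinuousLinearMap.comp_apply, ← ContinuousLinearMap.mul_def,
      (Unitary.mem_iff.mp hv).1, ContinuousLinearMap.one_apply]
  have hTint : ∀ (u : H →L[ℂ] H) (v : K →L[ℂ] K), u ∈ unitary (H →L[ℂ] H) →
      v ∈ unitary (K →L[ℂ] K) → u 𝔑.Ω = 𝔑.Ω → v 𝔐.Ω = 𝔐.Ω →
      (∀ x ∈ 𝔑.M, u * x * star u ∈ 𝔑.M) →
      (∀ x ∈ 𝔑.M, Φ.Φ (u * x * star u) = v * Φ.Φ x * star v) →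
      T ∘L u = v ∘L T := by
    intro u v hu hv huΩ hvΩ humem hequiv
    have hspan : Dense ((Submodule.span ℂ (S : Set H) : Submodule ℂ H) : Set H) := by
      rw [Submodule.span_eq]; exact hdS
    refine ContinuousLinearMap.ext_on hspan ?_
    rintro ξ ⟨a, rfl⟩
    set x := (a : H →L[ℂ] H) with hxdef
    have hx : x ∈ 𝔑.M := (hN' _).mp a.2
    have h1 : u (x 𝔑.Ω) = (u * x * star u) 𝔑.Ω := by
      simp only [ContinuousLinearMap.mul_apply, hfix u hu huΩ]
    show T (u (e' a)) = v (T (e' a))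
    have he'a : e' a = x 𝔑.Ω := rfl
    rw [he'a, h1, hTx _ (humem x hx), hequiv x hx, hTx x hx]
    simp only [ContinuousLinearMap.mul_apply, hfix' v hv hvΩ]
  have hTU : ∀ g : G, T ∘L 𝔑.U g = 𝔐.U g ∘L T := by
    intro g
    exact hTint _ _ (𝔑.U_unitary g) (𝔐.U_unitary g) (𝔑.U_Ω g) (𝔐.U_Ω g)
      (fun x hx => 𝔑.U_mem g x hx) (fun x hx => Φ.equivariant g x hx)
  have hTΔ : ∀ t : ℝ, T ∘L 𝔑.Δ t = 𝔐.Δ t ∘L T := by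
    intro t
    exact hTint _ _ (𝔑.Δ_unitary t) (𝔐.Δ_unitary t) (𝔑.Δ_Ω t) (𝔐.Δ_Ω t)
      (fun x hx => 𝔑.Δ_mem t x hx) (fun x hx => Φ.modularEq t x hx)
  -- ## the positive part `P = |T| = sqrt (T† T)`
  set A : H →L[ℂ] H := ContinuousLinearMap.adjoint T ∘L T with hAdef
  have hA0 : (0 : H →L[ℂ] H) ≤ A := by
    rw [ContinuousLinearMap.nonneg_iff_isPositive]
    exact ContinuousLinearMap.isPositive_adjoint_comp_self T
  set P : H →L[ℂ] H := CFC.sqrt A with hPdef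
  have hP0 : (0 : H →L[ℂ] H) ≤ P := CFC.sqrt_nonneg A
  have hPpos : P.IsPositive := (ContinuousLinearMap.nonneg_iff_isPositive P).mp hP0
  have hPP : P * P = A := CFC.sqrt_mul_sqrt_self A hA0
  have hPsa : ContinuousLinearMap.adjoint P = P := by
    rw [← ContinuousLinearMap.star_eq_adjoint]
    exact hPpos.isSelfAdjoint
  have hnormP : ∀ ξ : H, ‖P ξ‖ = ‖T ξ‖ := by
    intro ξ
    have h1 : ⟪P ξ, P ξ⟫_ℂ = ⟪T ξ, T ξ⟫_ℂ := by
      calc ⟪P ξ, P ξ⟫_ℂ = ⟪ξ, ContinuousLinearMap.adjoint P (P ξ)⟫_ℂ :=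
            (ContinuousLinearMap.adjoint_inner_right P ξ (P ξ)).symm
      _ = ⟪ξ, (P * P) ξ⟫_ℂ := by rw [hPsa, ContinuousLinearMap.mul_apply]
      _ = ⟪ξ, ContinuousLinearMap.adjoint T (T ξ)⟫_ℂ := by
            rw [hPP, hAdef, ContinuousLinearMap.comp_apply]
      _ = ⟪T ξ, T ξ⟫_ℂ := ContinuousLinearMap.adjoint_inner_right T ξ (T ξ)
    rw [inner_self_eq_norm_sq_to_K, inner_self_eq_norm_sq_to_K] at h1
    have h2 : ‖P ξ‖ ^ 2 = ‖T ξ‖ ^ 2 := by exact_mod_cast h1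
    calc ‖P ξ‖ = Real.sqrt (‖P ξ‖ ^ 2) := (Real.sqrt_sq (norm_nonneg _)).symm
    _ = Real.sqrt (‖T ξ‖ ^ 2) := by rw [h2]
    _ = ‖T ξ‖ := Real.sqrt_sq (norm_nonneg _)
  -- `P` commutes with any unitary intertwined by `T`
  have hcomm : ∀ (u : H →L[ℂ] H) (v : K →L[ℂ] K), u ∈ unitary (H →L[ℂ] H) →
      v ∈ unitary (K →L[ℂ] K) → T ∘L u = v ∘L T → P * u = u * P := by
    intro u v hu hv huv
    have huv' : ∀ ξ : H, T (u ξ) = v (T ξ) := by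
      intro ξ
      have := ContinuousLinearMap.ext_iff.mp huv ξ
      simpa using this
    have hu2 : u * star u = 1 := (Unitary.mem_iff.mp hu).2
    have hv1 : star v * v = 1 := (Unitary.mem_iff.mp hv).1
    have hupt : ∀ ξ : H, u (star u ξ) = ξ := by
      intro ξ
      rw [← ContinuousLinearMap.mul_apply, hu2, ContinuousLinearMap.one_apply]
    have hvpt : ∀ ζ : K, star v (v ζ) = ζ := by
      intro ζ
      rw [← ContinuousLinearMap.mul_apply, hv1, ContinuousLinearMap.one_apply]
    have h2 : ∀ ζ : K, ContinuousLinearMap.adjoint T (v ζ)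
        = u (ContinuousLinearMap.adjoint T ζ) := by
      intro ζ
      refine ext_inner_left ℂ fun w => ?_
      rw [ContinuousLinearMap.adjoint_inner_right]
      have hu' : u = ContinuousLinearMap.adjoint (star u) := by
        rw [ContinuousLinearMap.star_eq_adjoint, ContinuousLinearMap.adjoint_adjoint]
      calc ⟪T w, v ζ⟫_ℂ
          = ⟪star v (T w), ζ⟫_ℂ := by
            rw [ContinuousLinearMap.star_eq_adjoint, ContinuousLinearMap.adjoint_inner_left]
      _ = ⟪T (star u w), ζ⟫_ℂ := by
            have h3 := huv' (star u w)
            rw [hupt w] at h3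
            rw [h3, hvpt]
      _ = ⟪w, u (ContinuousLinearMap.adjoint T ζ)⟫_ℂ := by
            conv_rhs => rw [hu']
            rw [ContinuousLinearMap.adjoint_inner_right,
              ContinuousLinearMap.adjoint_inner_right]
    have hAu : A * u = u * A := by
      ext ξ
      simp only [ContinuousLinearMap.mul_apply, hAdef, ContinuousLinearMap.comp_apply]
      rw [huv' ξ, h2 (T ξ)]
    have hQpos : (0 : H →L[ℂ] H) ≤ u * P * star u := by
      rw [ContinuousLinearMap.nonneg_iff_isPositive]
      have h4 := hPpos.conj_adjoint u
      have h5 : u ∘L P ∘L ContinuousLinearMap.adjoint u = u * P * star u := by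
        rw [ContinuousLinearMap.star_eq_adjoint]
        rfl
      rwa [h5] at h4
    have hQQ : (u * P * star u) * (u * P * star u) = A := by
      have h1 : star u * u = 1 := (Unitary.mem_iff.mp hu).1
      have e : (u * P * star u) * (u * P * star u)
          = u * (P * ((star u * u) * (P * star u))) := by
        simp only [mul_assoc]
      rw [e, h1, one_mul, ← mul_assoc P P, hPP, ← mul_assoc u A, ← hAu, mul_assoc, hu2,
        mul_one]
    have hPQ : P = u * P * star u := hPdef.trans (CFC.sqrt_unique hQQ hQpos)
    calc P * u = (u * P * star u) * u := by rw [← hPQ]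
    _ = u * P * (star u * u) := by simp only [mul_assoc]
    _ = u * P := by rw [(Unitary.mem_iff.mp hu).1, mul_one]
  -- ## the polar part `W`
  let Pl : Submodule ℂ H := LinearMap.range (P : H →ₗ[ℂ] H)
  have hkerle : LinearMap.ker (P : H →ₗ[ℂ] H) ≤ LinearMap.ker (T : H →ₗ[ℂ] K) := by
    intro ξ hξ
    rw [LinearMap.mem_ker] at hξ ⊢
    have hn : ‖T ξ‖ = 0 := by
      rw [← hnormP]
      show ‖(P : H →ₗ[ℂ] H) ξ‖ = 0
      rw [hξ, norm_zero]
    simpa using hn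
  let Tq : (H ⧸ LinearMap.ker (P : H →ₗ[ℂ] H)) →ₗ[ℂ] K :=
    (LinearMap.ker (P : H →ₗ[ℂ] H)).liftQ (T : H →ₗ[ℂ] K) hkerle
  let eqv := (P : H →ₗ[ℂ] H).quotKerEquivRange
  let W₀ : Pl →ₗ[ℂ] K := Tq.comp eqv.symm.toLinearMap
  have hW₀ : ∀ (ξ : H) (h : P ξ ∈ Pl), W₀ ⟨P ξ, h⟩ = T ξ := by
    intro ξ h
    have h1 : eqv.symm ⟨(P : H →ₗ[ℂ] H) ξ, h⟩
        = (LinearMap.ker (P : H →ₗ[ℂ] H)).mkQ ξ :=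
      LinearMap.quotKerEquivRange_symm_apply_image (P : H →ₗ[ℂ] H) ξ h
    show Tq (eqv.symm ⟨(P : H →ₗ[ℂ] H) ξ, h⟩) = T ξ
    rw [h1]
    rfl
  have hW₀norm : ∀ s : Pl, ‖W₀ s‖ = ‖s‖ := by
    rintro ⟨ξ', hmem⟩
    obtain ⟨ξ, rfl⟩ := hmem
    show ‖W₀ ⟨P ξ, LinearMap.mem_range_self _ ξ⟩‖ = ‖P ξ‖
    rw [hW₀ ξ _, hnormP ξ]
  let W₀c : Pl →L[ℂ] K := W₀.mkContinuous 1 (fun s => by rw [hW₀norm s, one_mul])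
  let L : Submodule ℂ H := Pl.topologicalClosure
  haveI hLc : CompleteSpace L := (Pl.isClosed_topologicalClosure).completeSpace_coe
  let ι2 : Pl →L[ℂ] L :=
    (Submodule.inclusion Pl.le_topologicalClosure).mkContinuous 1
      (fun s => by rw [one_mul]; exact le_of_eq rfl)
  have hι2iso : Isometry (ι2 : Pl →L[ℂ] L) := Isometry.of_dist_eq (fun a b => rfl)
  have hLcoe : (L : Set H) = closure (Pl : Set H) := Submodule.topologicalClosure_coe Pl
  have hι2dense : DenseRange (ι2 : Pl →L[ℂ] L) := by
    intro y
    have hind : Topology.IsInducing (Subtype.val : L → H) := Topology.IsInducing.subtypeVal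
    rw [hind.closure_eq_preimage_closure_image]
    have him : (Subtype.val : L → H) '' Set.range ι2 = (Pl : Set H) := by
      ext z
      constructor
      · rintro ⟨w, ⟨s, rfl⟩, rfl⟩
        exact s.2
      · intro hz
        exact ⟨ι2 ⟨z, hz⟩, ⟨⟨z, hz⟩, rfl⟩, rfl⟩
    rw [Set.mem_preimage, him]
    have hy : (y : H) ∈ (L : Set H) := y.2
    rwa [hLcoe] at hy
  obtain ⟨W₁, hW₁ap, -, hW₁norm⟩ := exists_extension_of_denseRange ι2 hι2iso hι2dense W₀c
  let W : H →L[ℂ] K := W₁ ∘L (L.orthogonalProjectionOnto : H →L[ℂ] L)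
  have hPmemL : ∀ ξ : H, P ξ ∈ L := fun ξ =>
    Pl.le_topologicalClosure (LinearMap.mem_range_self _ ξ)
  have hprojmem : ∀ (z : H) (hz : z ∈ L), L.orthogonalProjectionOnto z = ⟨z, hz⟩ := by
    intro z hz
    exact Subtype.ext (L.starProjection_eq_self_iff.mpr hz)
  have hWap : ∀ (z : H) (hz : z ∈ L), W z = W₁ ⟨z, hz⟩ := by
    intro z hz
    show W₁ (L.orthogonalProjectionOnto z) = W₁ ⟨z, hz⟩
    rw [hprojmem z hz]
  have hWP : ∀ ξ : H, W (P ξ) = T ξ := by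
    intro ξ
    rw [hWap (P ξ) (hPmemL ξ)]
    have h1 : (⟨P ξ, hPmemL ξ⟩ : L) = ι2 ⟨P ξ, LinearMap.mem_range_self _ ξ⟩ := rfl
    rw [h1, hW₁ap]
    exact hW₀ ξ _
  have hTW : T = W ∘L P := by
    ext ξ
    exact (hWP ξ).symm
  have hclosPl : closure (Set.range fun w : H => P w) = (L : Set H) := by
    have hr : (Set.range fun w : H => P w) = (Pl : Set H) := by
      ext z
      constructor
      · rintro ⟨w, rfl⟩; exact LinearMap.mem_range_self _ w
      · rintro ⟨w, rfl⟩; exact ⟨w, rfl⟩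
    rw [hr, hLcoe]
  have hW₁iso : ∀ y : L, ‖W₁ y‖ = ‖y‖ := hW₁norm (fun s => hW₀norm s)
  have hWiso : ∀ v ∈ closure (Set.range fun w : H => P w), ‖W v‖ = ‖v‖ := by
    intro v hv
    rw [hclosPl] at hv
    rw [hWap v hv, hW₁iso]
    rfl
  have hWker : ∀ v : H, (∀ w : H, ⟪v, P w⟫_ℂ = 0) → W v = 0 := by
    intro v hv
    have hvorth : v ∈ Lᗮ := by
      rw [Submodule.mem_orthogonal]
      intro z hz
      have hPl : (Pl : Set H) ⊆ {z : H | ⟪z, v⟫_ℂ = 0} := by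
        rintro _ ⟨w, rfl⟩
        show ⟪P w, v⟫_ℂ = 0
        rw [← inner_conj_symm, hv w, map_zero]
      have hcl : (L : Set H) ⊆ {z : H | ⟪z, v⟫_ℂ = 0} := by
        rw [hLcoe]
        exact closure_minimal hPl
          (isClosed_eq (Continuous.inner continuous_id continuous_const) continuous_const)
      exact hcl hz
    show W₁ (L.orthogonalProjectionOnto v) = 0
    rw [Submodule.orthogonalProjectionOnto_apply_of_mem_orthogonal hvorth, map_zero]
  have hWz : ∀ z ∈ Lᗮ, W z = 0 := by
    intro z hz
    show W₁ (L.orthogonalProjectionOnto z) = 0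
    rw [Submodule.orthogonalProjectionOnto_apply_of_mem_orthogonal hz, map_zero]
  -- ## `W` inherits the intertwining relations
  have hWint : ∀ (u : H →L[ℂ] H) (v : K →L[ℂ] K), u ∈ unitary (H →L[ℂ] H) →
      v ∈ unitary (K →L[ℂ] K) → T ∘L u = v ∘L T → W ∘L u = v ∘L W := by
    intro u v hu hv huv
    have hPu : P * u = u * P := hcomm u v hu hv huv
    have hPu' : ∀ w : H, u (P w) = P (u w) := by
      intro w
      have h := ContinuousLinearMap.ext_iff.mp hPu w
      simpa [ContinuousLinearMap.mul_apply] using h.symm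
    have hstaru : ∀ w : H, star u (P w) = P (star u w) := by
      intro w
      have h1 := congrArg star hPu
      rw [star_mul, star_mul, hPpos.isSelfAdjoint.star_eq] at h1
      have h := ContinuousLinearMap.ext_iff.mp h1 w
      simpa [ContinuousLinearMap.mul_apply] using h
    have hmapsL : ∀ (u' : H →L[ℂ] H), (∀ w : H, u' (P w) = P (u' w)) →
        ∀ z ∈ L, u' z ∈ L := by
      intro u' hu' z hz
      have h1 : u' '' (Pl : Set H) ⊆ (Pl : Set H) := by
        rintro _ ⟨_, ⟨w, rfl⟩, rfl⟩
        exact ⟨u' w, (hu' w).symm⟩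
      have hz' : z ∈ closure (Pl : Set H) := by rwa [← hLcoe]
      have h2 : u' z ∈ closure (Pl : Set H) :=
        closure_mono h1 (image_closure_subset_closure_image u'.continuous ⟨z, hz', rfl⟩)
      show z ∈ {w : H | u' w ∈ L}
      rw [show (z ∈ {w : H | u' w ∈ L}) = (u' z ∈ (L : Set H)) from rfl, hLcoe]
      exact h2
    have hL_su : ∀ z ∈ L, star u z ∈ L := hmapsL (star u) hstaru
    have horth : ∀ z ∈ Lᗮ, u z ∈ Lᗮ := by
      intro z hz
      rw [Submodule.mem_orthogonal] at hz ⊢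
      intro w hw
      have h3 : ⟪w, u z⟫_ℂ = ⟪star u w, z⟫_ℂ := by
        rw [ContinuousLinearMap.star_eq_adjoint, ContinuousLinearMap.adjoint_inner_left]
      rw [h3]
      exact hz _ (hL_su w hw)
    have hWL : ∀ z ∈ L, W (u z) = v (W z) := by
      intro z hz
      have hsub : (Pl : Set H) ⊆ {z : H | W (u z) = v (W z)} := by
        rintro _ ⟨w, rfl⟩
        show W (u (P w)) = v (W (P w))
        rw [hPu' w, hWP, hWP]
        have := ContinuousLinearMap.ext_iff.mp huv w
        simpa using this
      have hclosed : IsClosed {z : H | W (u z) = v (W z)} :=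
        isClosed_eq (W.continuous.comp u.continuous) (v.continuous.comp W.continuous)
      have hLs : (L : Set H) ⊆ {z : H | W (u z) = v (W z)} := by
        rw [hLcoe]
        exact closure_minimal hsub hclosed
      exact hLs hz
    ext ξ
    set z₁ : H := ((L.orthogonalProjectionOnto ξ : L) : H) with hz₁def
    have hz₁ : z₁ ∈ L := (L.orthogonalProjectionOnto ξ).2
    have hz₂ : ξ - z₁ ∈ Lᗮ := L.sub_starProjection_mem_orthogonal ξ
    have hξ : ξ = z₁ + (ξ - z₁) := by abel
    show W (u ξ) = v (W ξ)
    rw [hξ]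
    calc W (u (z₁ + (ξ - z₁))) = W (u z₁) + W (u (ξ - z₁)) := by rw [map_add, map_add]
    _ = v (W z₁) := by rw [hWL z₁ hz₁, hWz _ (horth _ hz₂), add_zero]
    _ = v (W (z₁ + (ξ - z₁))) := by rw [map_add, hWz _ hz₂, add_zero]
  have hWU : ∀ g : G, W ∘L 𝔑.U g = 𝔐.U g ∘L W := fun g =>
    hWint _ _ (𝔑.U_unitary g) (𝔐.U_unitary g) (hTU g)
  have hWΔ : ∀ t : ℝ, W ∘L 𝔑.Δ t = 𝔐.Δ t ∘L W := fun t =>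
    hWint _ _ (𝔑.Δ_unitary t) (𝔐.Δ_unitary t) (hTΔ t)
  -- ## assembly
  refine ⟨T, hTnorm, hTx, hTU, hTΔ, ?_, W, P, hPpos, hTW, hPP, hWiso, hWker, hWU, hWΔ, ?_⟩
  · intro g t
    rw [← ContinuousLinearMap.comp_assoc, hTU g, ContinuousLinearMap.comp_assoc, hTΔ t,
      ← ContinuousLinearMap.comp_assoc]
  · intro g t
    rw [← ContinuousLinearMap.comp_assoc, hWU g, ContinuousLinearMap.comp_assoc, hWΔ t,
      ← ContinuousLinearMap.comp_assoc]

end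
end

section
/- Every weakly mixing W*-dynamical system is disjoint from every compact W*-dynamical system: if 𝔐 = (M,φ,β,G) is weakly mixing and 𝔑 = (N,ρ,α,G) is compact, then J_m(𝔑,𝔐) = {ρ(·)1_M}. -/
open scoped InnerProductSpace ComplexInnerProductSpace ComplexOrder
open Filter

noncomputable section

namespace WStar

variable {G : Type} [Group G] [TopologicalSpace G]
variable {H : Type} [NormedAddCommGroup H] [InnerProductSpace ℂ H] [CompleteSpace H]
variable {K : Type} [NormedAddCommGroup K] [InnerProductSpace ℂ K] [CompleteSpace K]

lemma star_U_Ω (𝔑 : WStar G H) (g : G) : star (𝔑.U g) 𝔑.Ω = 𝔑.Ω := by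
  conv_lhs => rw [← 𝔑.U_Ω g]
  rw [← ContinuousLinearMap.mul_apply, (Unitary.mem_iff.mp (𝔑.U_unitary g)).1,
    ContinuousLinearMap.one_apply]

lemma act_apply_Ω (𝔑 : WStar G H) (g : G) (x : H →L[ℂ] H) :
    (𝔑.act g x) 𝔑.Ω = 𝔑.U g (x 𝔑.Ω) := by
  simp only [act, ContinuousLinearMap.mul_apply, 𝔑.star_U_Ω g]

lemma norm_U_apply (𝔑 : WStar G H) (g : G) (ξ : H) : ‖𝔑.U g ξ‖ = ‖ξ‖ := by
  have h : ⟪𝔑.U g ξ, 𝔑.U g ξ⟫_ℂ = ⟪ξ, ξ⟫_ℂ := by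
    rw [← ContinuousLinearMap.adjoint_inner_right, ← ContinuousLinearMap.star_eq_adjoint,
      ← ContinuousLinearMap.mul_apply, (Unitary.mem_iff.mp (𝔑.U_unitary g)).1,
      ContinuousLinearMap.one_apply]
  rw [inner_self_eq_norm_sq_to_K, inner_self_eq_norm_sq_to_K] at h
  have h2 : ‖𝔑.U g ξ‖ ^ 2 = ‖ξ‖ ^ 2 := by exact_mod_cast h
  nlinarith [norm_nonneg (𝔑.U g ξ), norm_nonneg ξ]

lemma state_act (𝔑 : WStar G H) (g : G) (x : H →L[ℂ] H) :
    𝔑.state (𝔑.act g x) = 𝔑.state x := by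
  rw [state, state, 𝔑.act_apply_Ω, ← ContinuousLinearMap.adjoint_inner_left,
    ← ContinuousLinearMap.star_eq_adjoint, 𝔑.star_U_Ω g]

lemma star_act (𝔑 : WStar G H) (g : G) (x : H →L[ℂ] H) :
    star (𝔑.act g x) = 𝔑.act g (star x) := by
  simp only [act, star_mul, star_star, mul_assoc]

lemma state_star_mul (𝔑 : WStar G H) (b c : H →L[ℂ] H) :
    𝔑.state (star b * c) = ⟪b 𝔑.Ω, c 𝔑.Ω⟫_ℂ := by
  rw [state, ContinuousLinearMap.mul_apply, ContinuousLinearMap.star_eq_adjoint,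
    ContinuousLinearMap.adjoint_inner_right]

lemma state_star (𝔑 : WStar G H) (x : H →L[ℂ] H) :
    𝔑.state (star x) = starRingEnd ℂ (𝔑.state x) := by
  have : star x = star x * 1 := by rw [mul_one]
  rw [this, 𝔑.state_star_mul x 1, ContinuousLinearMap.one_apply, ← inner_conj_symm, state]

end WStar

namespace Markov

variable {G : Type} [Group G] [TopologicalSpace G]
variable {H : Type} [NormedAddCommGroup H] [InnerProductSpace ℂ H] [CompleteSpace H]
variable {K : Type} [NormedAddCommGroup K] [InnerProductSpace ℂ K] [CompleteSpace K]
variable {𝔑 : WStar G H} {𝔐 : WStar G K} (Φ : Markov 𝔑 𝔐)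

lemma twopos (a : H →L[ℂ] H) (ha : a ∈ 𝔑.M) (ξ₀ ξ₁ : K) :
    0 ≤ ⟪ξ₀, ξ₀⟫_ℂ + ⟪ξ₀, Φ.Φ a ξ₁⟫_ℂ + ⟪ξ₁, Φ.Φ (star a) ξ₀⟫_ℂ
      + ⟪ξ₁, Φ.Φ (star a * a) ξ₁⟫_ℂ := by
  have h := Φ.cp 2 ![1, a] (by
    intro i; fin_cases i
    · exact one_mem 𝔑.M
    · exact ha) ![ξ₀, ξ₁]
  simpa [Fin.sum_univ_two, Φ.unital, add_assoc] using h

lemma onepos (a : H →L[ℂ] H) (ha : a ∈ 𝔑.M) (ξ : K) :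
    0 ≤ ⟪ξ, Φ.Φ (star a * a) ξ⟫_ℂ := by
  have h := Φ.cp 1 ![a] (by intro i; fin_cases i; exact ha) ![ξ]
  simpa [Fin.sum_univ_one] using h

lemma map_star (a : H →L[ℂ] H) (ha : a ∈ 𝔑.M) : Φ.Φ (star a) = star (Φ.Φ a) := by
  have key : ∀ ξ₀ ξ₁ : K,
      (⟪ξ₀, Φ.Φ a ξ₁⟫_ℂ + ⟪ξ₁, Φ.Φ (star a) ξ₀⟫_ℂ).im = 0 := by
    intro ξ₀ ξ₁
    have h := (Complex.le_def.mp (Φ.twopos a ha ξ₀ ξ₁)).2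
    have h0 : (⟪ξ₀, ξ₀⟫_ℂ).im = 0 := by rw [inner_self_eq_norm_sq_to_K]; simp [← Complex.ofReal_pow]
    have h1 : (⟪ξ₁, Φ.Φ (star a * a) ξ₁⟫_ℂ).im = 0 := (Complex.le_def.mp (Φ.onepos a ha ξ₁)).2.symm
    simp only [Complex.add_im, Complex.zero_im] at h ⊢
    linarith
  have key2 : ∀ ξ₀ ξ₁ : K, ⟪ξ₁, Φ.Φ (star a) ξ₀⟫_ℂ = starRingEnd ℂ ⟪ξ₀, Φ.Φ a ξ₁⟫_ℂ := by
    intro ξ₀ ξ₁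
    have h1 := key ξ₀ ξ₁
    have h2 := key (Complex.I • ξ₀) ξ₁
    rw [inner_smul_left, _root_.map_smul, inner_smul_right] at h2
    set u := ⟪ξ₀, Φ.Φ a ξ₁⟫_ℂ
    set v := ⟪ξ₁, Φ.Φ (star a) ξ₀⟫_ℂ
    have h2' : (starRingEnd ℂ Complex.I * u + Complex.I * v).im = 0 := h2
    simp only [Complex.add_im, Complex.mul_im, Complex.conj_I, Complex.neg_im, Complex.neg_re,
      Complex.I_re, Complex.I_im] at h2'
    apply Complex.ext
    · simp only [Complex.conj_re]; linarith
    · simp only [Complex.conj_im]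
      simp only [Complex.add_im] at h1
      linarith
  ext ξ₀
  apply ext_inner_left ℂ
  intro ξ₁
  rw [key2 ξ₀ ξ₁, inner_conj_symm, ContinuousLinearMap.star_eq_adjoint,
    ContinuousLinearMap.adjoint_inner_right]

lemma schwarz (a : H →L[ℂ] H) (ha : a ∈ 𝔑.M) : ‖Φ.Φ a 𝔐.Ω‖ ≤ ‖a 𝔑.Ω‖ := by
  have h := Φ.twopos a ha (-(Φ.Φ a 𝔐.Ω)) 𝔐.Ω
  rw [Φ.map_star a ha] at h
  have hT1 : ⟪-(Φ.Φ a 𝔐.Ω), -(Φ.Φ a 𝔐.Ω)⟫_ℂ = ((‖Φ.Φ a 𝔐.Ω‖ : ℂ))^2 := by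
    rw [inner_neg_neg, inner_self_eq_norm_sq_to_K]; rfl
  have hT2 : ⟪-(Φ.Φ a 𝔐.Ω), Φ.Φ a 𝔐.Ω⟫_ℂ = -((‖Φ.Φ a 𝔐.Ω‖ : ℂ))^2 := by
    rw [inner_neg_left, inner_self_eq_norm_sq_to_K]; rfl
  have hT3 : ⟪𝔐.Ω, star (Φ.Φ a) (-(Φ.Φ a 𝔐.Ω))⟫_ℂ = -((‖Φ.Φ a 𝔐.Ω‖ : ℂ))^2 := by
    rw [map_neg, inner_neg_right, ContinuousLinearMap.star_eq_adjoint,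
      ContinuousLinearMap.adjoint_inner_right, inner_self_eq_norm_sq_to_K]; rfl
  have hT4 : ⟪𝔐.Ω, Φ.Φ (star a * a) 𝔐.Ω⟫_ℂ = ((‖a 𝔑.Ω‖ : ℂ))^2 := by
    have : ⟪𝔐.Ω, Φ.Φ (star a * a) 𝔐.Ω⟫_ℂ = 𝔐.state (Φ.Φ (star a * a)) := rfl
    rw [this, Φ.statePres _ (mul_mem (star_mem ha) ha), 𝔑.state_star_mul,
      inner_self_eq_norm_sq_to_K]; rfl
  rw [hT1, hT2, hT3, hT4] at h
  have hre := (Complex.le_def.mp h).1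
  simp only [Complex.add_re, Complex.neg_re, ← Complex.ofReal_pow, Complex.ofReal_re,
    Complex.zero_re] at hre
  nlinarith [norm_nonneg (Φ.Φ a 𝔐.Ω), norm_nonneg (a 𝔑.Ω)]

lemma map_sub (b c : H →L[ℂ] H) (hb : b ∈ 𝔑.M) (hc : c ∈ 𝔑.M) :
    Φ.Φ (b - c) = Φ.Φ b - Φ.Φ c := by
  have h1 : b - c = b + (-1 : ℂ) • c := by
    rw [neg_one_smul]; abel
  rw [h1, Φ.map_add b hb ((-1 : ℂ) • c) (𝔑.M.toStarSubalgebra.smul_mem hc (-1 : ℂ)),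
    Φ.map_smul (-1 : ℂ) c hc, neg_one_smul]
  abel

end Markov


/-- **Theorem (weakly mixing systems are disjoint from compact systems).** If `𝔐` is a
weakly mixing `W*`-dynamical system and `𝔑` is a compact one, then the only element of
`J_m(𝔑, 𝔐)` is the trivial joining `Φ = ρ(·) 1_M`. -/
theorem weakly_mixing_disjoint_from_compact {G : Type} [Group G] [TopologicalSpace G] [IsTopologicalGroup G]
    [LocallyCompactSpace G] [TopologicalSpace.SeparableSpace G]
    {H : Type} [NormedAddCommGroup H] [InnerProductSpace ℂ H] [CompleteSpace H]
    {K : Type} [NormedAddCommGroup K] [InnerProductSpace ℂ K] [CompleteSpace K]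
    (𝔑 : WStar G H) (𝔐 : WStar G K)
    (hwm : 𝔐.WeaklyMixing) (hcpt : 𝔑.IsCompactSystem) :
    ∀ Φ : Markov 𝔑 𝔐, ∀ x ∈ 𝔑.M,
      Φ.Φ x = 𝔑.state x • (1 : K →L[ℂ] K) := by
  intro Φ x hx
  classical
  -- Reduce to the centred element x'
  set x' : H →L[ℂ] H := x - 𝔑.state x • 1 with hx'def
  have hone : (𝔑.state x • 1 : H →L[ℂ] H) ∈ 𝔑.M :=
    𝔑.M.toStarSubalgebra.smul_mem (one_mem 𝔑.M) (𝔑.state x)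
  have hx' : x' ∈ 𝔑.M := sub_mem hx hone
  have hstate1 : 𝔑.state 1 = 1 := by
    rw [WStar.state, ContinuousLinearMap.one_apply, inner_self_eq_norm_sq_to_K, 𝔑.normΩ]
    norm_num
  have hstate' : 𝔑.state x' = 0 := by
    rw [hx'def, WStar.state, ContinuousLinearMap.sub_apply, ContinuousLinearMap.smul_apply,
      inner_sub_right, inner_smul_right, ContinuousLinearMap.one_apply]
    have : ⟪𝔑.Ω, 𝔑.Ω⟫_ℂ = 1 := by
      rw [inner_self_eq_norm_sq_to_K, 𝔑.normΩ]; norm_num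
    rw [this, mul_one, ← WStar.state, sub_self]
  have hΦx' : Φ.Φ x' = Φ.Φ x - 𝔑.state x • 1 := by
    rw [hx'def, Φ.map_sub x (𝔑.state x • 1) hx hone, Φ.map_smul (𝔑.state x) 1 (one_mem 𝔑.M),
      Φ.unital]
  suffices hz : Φ.Φ x' = 0 by
    rw [hΦx'] at hz
    exact sub_eq_zero.mp hz
  -- It suffices to show Φ x' Ω = 0
  apply 𝔐.separating _ (Φ.mapsTo x' hx')
  by_contra hΩ0
  set y : K →L[ℂ] K := Φ.Φ x' with hydef
  have hyM : y ∈ 𝔐.M := Φ.mapsTo x' hx'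
  set δ : ℝ := ‖y 𝔐.Ω‖ with hδdef
  have hδ : 0 < δ := norm_pos_iff.mpr hΩ0
  have hy0 : 𝔐.state y = 0 := by rw [hydef, Φ.statePres x' hx', hstate']
  -- total boundedness of the orbit with centres in the orbit
  obtain ⟨t, hts, htfin, hcov⟩ :=
    totallyBounded_iff_subset.mp (hcpt x' hx') _
      (Metric.dist_mem_uniformity (show (0:ℝ) < δ/4 by linarith))
  have hsel : ∀ ξ ∈ t, ∃ g0 : G, (𝔑.act g0 x') 𝔑.Ω = ξ := fun ξ hξ => hts hξ
  choose! sel hselspec using hsel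
  set T : Finset G := htfin.toFinset.image sel with hTdef
  set F : Finset (K →L[ℂ] K) := insert (star y) (T.image fun g0 => 𝔐.act g0 y) with hFdef
  have hF : ∀ z ∈ F, z ∈ 𝔐.M ∧ 𝔐.state z = 0 := by
    intro z hz
    rw [hFdef, Finset.mem_insert] at hz
    rcases hz with hz | hz
    · subst hz
      refine ⟨star_mem hyM, ?_⟩
      rw [𝔐.state_star, hy0, map_zero]
    · obtain ⟨g0, _, rfl⟩ := Finset.mem_image.mp hz
      exact ⟨𝔐.U_mem g0 y hyM, by rw [𝔐.state_act, hy0]⟩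
  obtain ⟨g, hg⟩ := hwm (δ^2/2) (by positivity) F hF
  -- the orbit point of g is close to some centre
  have hmem : (𝔑.act g x') 𝔑.Ω ∈ ⋃ ξ ∈ t, {v | dist v ξ < δ/4} := hcov ⟨g, rfl⟩
  obtain ⟨ξ, hξt, hξnear⟩ := Set.mem_iUnion₂.mp hmem
  have hξnear' : dist ((𝔑.act g x') 𝔑.Ω) ξ < δ/4 := hξnear
  have hselξ : (𝔑.act (sel ξ) x') 𝔑.Ω = ξ := hselspec ξ hξt
  have hselT : sel ξ ∈ T := by
    rw [hTdef]
    exact Finset.mem_image_of_mem sel (htfin.mem_toFinset.mpr hξt)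
  -- transfer closeness through Φ
  set g0 := sel ξ
  have hactgm : 𝔑.act g x' ∈ 𝔑.M := 𝔑.U_mem g x' hx'
  have hactg0m : 𝔑.act g0 x' ∈ 𝔑.M := 𝔑.U_mem g0 x' hx'
  have haM : 𝔑.act g x' - 𝔑.act g0 x' ∈ 𝔑.M := sub_mem hactgm hactg0m
  have hΦa : Φ.Φ (𝔑.act g x' - 𝔑.act g0 x') = 𝔐.act g y - 𝔐.act g0 y := by
    rw [Φ.map_sub _ _ hactgm hactg0m, Φ.equivariant g x' hx', Φ.equivariant g0 x' hx']
  have hu : ‖(𝔐.act g y) 𝔐.Ω‖ = δ := by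
    rw [𝔐.act_apply_Ω, 𝔐.norm_U_apply]
  have hv : ‖(𝔐.act g0 y) 𝔐.Ω‖ = δ := by
    rw [𝔐.act_apply_Ω, 𝔐.norm_U_apply]
  have huv : ‖(𝔐.act g y) 𝔐.Ω - (𝔐.act g0 y) 𝔐.Ω‖ < δ / 4 := by
    have h2 : ‖(𝔑.act g x' - 𝔑.act g0 x') 𝔑.Ω‖ < δ / 4 := by
      rw [ContinuousLinearMap.sub_apply, ← dist_eq_norm, hselξ]; exact hξnear'
    calc ‖(𝔐.act g y) 𝔐.Ω - (𝔐.act g0 y) 𝔐.Ω‖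
        = ‖(Φ.Φ (𝔑.act g x' - 𝔑.act g0 x')) 𝔐.Ω‖ := by
          rw [hΦa, ContinuousLinearMap.sub_apply]
      _ ≤ ‖(𝔑.act g x' - 𝔑.act g0 x') 𝔑.Ω‖ := Φ.schwarz _ haM
      _ < δ / 4 := h2
  have hre : δ ^ 2 / 2 < (⟪(𝔐.act g y) 𝔐.Ω, (𝔐.act g0 y) 𝔐.Ω⟫_ℂ).re := by
    have hns := norm_sub_sq (𝕜 := ℂ) (E := K) ((𝔐.act g y) 𝔐.Ω) ((𝔐.act g0 y) 𝔐.Ω)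
    have hre' : RCLike.re ⟪(𝔐.act g y) 𝔐.Ω, (𝔐.act g0 y) 𝔐.Ω⟫_ℂ
        = (⟪(𝔐.act g y) 𝔐.Ω, (𝔐.act g0 y) 𝔐.Ω⟫_ℂ).re := rfl
    rw [hu, hv, hre'] at hns
    nlinarith [norm_nonneg ((𝔐.act g y) 𝔐.Ω - (𝔐.act g0 y) 𝔐.Ω), huv, hδ]
  have hkey : ⟪(𝔐.act g y) 𝔐.Ω, (𝔐.act g0 y) 𝔐.Ω⟫_ℂ
      = 𝔐.state (𝔐.act g (star y) * 𝔐.act g0 y) := by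
    rw [← 𝔐.star_act, 𝔐.state_star_mul]
  have hsmall : ‖𝔐.state (𝔐.act g (star y) * 𝔐.act g0 y)‖ < δ ^ 2 / 2 :=
    hg (star y) (by rw [hFdef]; exact Finset.mem_insert_self _ _) (𝔐.act g0 y)
      (by rw [hFdef]; exact Finset.mem_insert_of_mem (Finset.mem_image_of_mem _ hselT))
  rw [← hkey] at hsmall
  have hle : (⟪(𝔐.act g y) 𝔐.Ω, (𝔐.act g0 y) 𝔐.Ω⟫_ℂ).re
      ≤ ‖⟪(𝔐.act g y) 𝔐.Ω, (𝔐.act g0 y) 𝔐.Ω⟫_ℂ‖ := by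
    exact Complex.re_le_norm _
  linarith

end
end

section
/- Let M be a von Neumann algebra with a faithful normal state φ, let α ∈ Aut(M,φ), and let V_α be the unique unitary on L²(M,φ) implementing α and fixing Ω_φ. Let ζ ∈ 𝔇(S_φ), where S_φ is the closure of xΩ_φ ↦ x*Ω_φ, and let L_ζ be the closed operator affiliated to M obtained as the closure of the densely defined operator x′Ω_φ ↦ x′ζ (x′ ∈ M′), with polar decomposition L_ζ = v L_η, where v ∈ M is a partial isometry and η = |L_ζ|Ω_φ. Then V_α ζ ∈ 𝔇(S_φ), and the polar decomposition of L_{V_α ζ} is L_{V_α ζ} = α(v) L_{V_α η}. -/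
open scoped InnerProductSpace ComplexInnerProductSpace ComplexOrder
open Filter

noncomputable section

/-- A von Neumann algebra in standard form: a cyclic and separating unit vector `Ω`. -/
structure StdForm (K : Type) [NormedAddCommGroup K] [InnerProductSpace ℂ K]
    [CompleteSpace K] where
  M : VonNeumannAlgebra K
  Ω : K
  normΩ : ‖Ω‖ = 1
  cyclic : Dense {ξ : K | ∃ x ∈ M, x Ω = ξ}
  separating : ∀ x ∈ M, x Ω = 0 → x = 0

/-- Membership in the domain of the Tomita operator `S_φ`, the closure of the
conjugate-linear operator `x Ω ↦ x* Ω` (`x ∈ M`): there is a sequence `x n ∈ M` with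
`x n Ω → ζ` such that `(x n)* Ω` also converges. -/
def InDomS {K : Type} [NormedAddCommGroup K] [InnerProductSpace ℂ K] [CompleteSpace K]
    (𝔐 : StdForm K) (ζ : K) : Prop :=
  ∃ f : ℕ → K →L[ℂ] K, (∀ n, f n ∈ 𝔐.M) ∧
    Filter.Tendsto (fun n => (f n) 𝔐.Ω) Filter.atTop (nhds ζ) ∧
    ∃ ζ' : K, Filter.Tendsto (fun n => (star (f n)) 𝔐.Ω) Filter.atTop (nhds ζ')

/-- `(v, η)` is the polar-decomposition data of the closed operator `L_ζ` affiliated to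
`M` (the closure of `x' Ω ↦ x' ζ`, `x' ∈ M'`): `v ∈ M` is a partial isometry,
`η = |L_ζ| Ω` induces a positive operator (`⟨x' Ω, x' η⟩ ≥ 0` for all `x' ∈ M'`),
`L_ζ = v L_η` on the core `M' Ω`, and `v* v` is the projection onto the closure of
`M' η` (the support of `L_η = |L_ζ|`). -/
def IsPolarData {K : Type} [NormedAddCommGroup K] [InnerProductSpace ℂ K] [CompleteSpace K]
    (𝔐 : StdForm K) (ζ : K) (v : K →L[ℂ] K) (η : K) : Prop :=
  v ∈ 𝔐.M ∧
  (∀ y ∈ 𝔐.M.commutant, 0 ≤ ⟪y 𝔐.Ω, y η⟫_ℂ) ∧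
  (∀ y ∈ 𝔐.M.commutant, y ζ = v (y η)) ∧
  IsIdempotentElem (star v * v) ∧
  (∀ w : K, (star v * v) w = w ↔ w ∈ closure {u : K | ∃ y ∈ 𝔐.M.commutant, y η = u})

/-- **Lemma (equivariance of the polar decomposition of `L_ζ`).** Let `M` be a von
Neumann algebra with faithful normal state `φ` (standard form, cyclic separating vector
`Ω`), let `α ∈ Aut(M, φ)` be implemented by the canonical unitary `V` (with `V Ω = Ω`),
and let `ζ ∈ 𝔇(S_φ)`.  If `L_ζ = v L_η` is the polar decomposition of the closed
operator `L_ζ` affiliated to `M`, then `V ζ ∈ 𝔇(S_φ)` and the polar decomposition of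
`L_{V ζ}` is `L_{V ζ} = α(v) L_{V η}`, where `α(v) = V v V*`. -/
theorem polar_decomposition_equivariant
    {K : Type} [NormedAddCommGroup K] [InnerProductSpace ℂ K] [CompleteSpace K]
    (𝔐 : StdForm K) (V : K →L[ℂ] K)
    (hV : V ∈ unitary (K →L[ℂ] K)) (hVΩ : V 𝔐.Ω = 𝔐.Ω)
    (hVM : ∀ x ∈ 𝔐.M, V * x * star V ∈ 𝔐.M)
    (hVM' : ∀ x ∈ 𝔐.M, star V * x * V ∈ 𝔐.M)
    (ζ η : K) (v : K →L[ℂ] K)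
    (hζ : InDomS 𝔐 ζ)
    (hpolar : IsPolarData 𝔐 ζ v η) :
    InDomS 𝔐 (V ζ) ∧ IsPolarData 𝔐 (V ζ) (V * v * star V) (V η) := by
  obtain ⟨hV1, hV2⟩ := Unitary.mem_iff.mp hV
  have hVV : ∀ w : K, (star V) (V w) = w := by
    intro w
    have := congrArg (fun A : K →L[ℂ] K => A w) hV1
    simpa [ContinuousLinearMap.mul_apply] using this
  have hVV' : ∀ w : K, V ((star V) w) = w := by
    intro w
    have := congrArg (fun A : K →L[ℂ] K => A w) hV2
    simpa [ContinuousLinearMap.mul_apply] using this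
  have hVΩ' : (star V) 𝔐.Ω = 𝔐.Ω := by
    calc (star V) 𝔐.Ω = (star V) (V 𝔐.Ω) := by rw [hVΩ]
      _ = 𝔐.Ω := hVV _
  have hinner : ∀ a b : K, ⟪V a, V b⟫_ℂ = ⟪a, b⟫_ℂ := by
    intro a b
    conv_rhs => rw [← hVV a]
    rw [ContinuousLinearMap.star_eq_adjoint, ContinuousLinearMap.adjoint_inner_left]
  -- commutant is preserved by conjugation
  have hC : ∀ y ∈ 𝔐.M.commutant, star V * y * V ∈ 𝔐.M.commutant := by
    intro y hy
    rw [VonNeumannAlgebra.mem_commutant_iff]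
    intro x hx
    have h := VonNeumannAlgebra.mem_commutant_iff.mp hy _ (hVM x hx)
    ext w
    simp only [ContinuousLinearMap.mul_apply]
    have hw := congrArg (fun A : K →L[ℂ] K => A (V w)) h
    simp only [ContinuousLinearMap.mul_apply, hVV] at hw
    calc x ((star V) (y (V w))) = (star V) (V (x ((star V) (y (V w))))) := (hVV _).symm
      _ = (star V) (y (V (x w))) := by rw [hw]
  have hC' : ∀ y ∈ 𝔐.M.commutant, V * y * star V ∈ 𝔐.M.commutant := by
    intro y hy
    rw [VonNeumannAlgebra.mem_commutant_iff]
    intro x hx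
    have h := VonNeumannAlgebra.mem_commutant_iff.mp hy _ (hVM' x hx)
    ext w
    simp only [ContinuousLinearMap.mul_apply]
    have hw := congrArg (fun A : K →L[ℂ] K => A ((star V) w)) h
    simp only [ContinuousLinearMap.mul_apply, hVV'] at hw
    calc x (V (y ((star V) w))) = V ((star V) (x (V (y ((star V) w))))) := (hVV' _).symm
      _ = V (y ((star V) (x w))) := by rw [hw]
  obtain ⟨hvM, hpos, heq, hidem, hsupp⟩ := hpolar
  constructor
  · -- V ζ ∈ 𝔇(S)
    obtain ⟨f, hfM, hfΩ, ζ', hf'⟩ := hζ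
    refine ⟨fun n => V * f n * star V, fun n => hVM _ (hfM n), ?_, V ζ', ?_⟩
    · have : (fun n => (V * f n * star V) 𝔐.Ω) = fun n => V (f n 𝔐.Ω) := by
        funext n; simp [ContinuousLinearMap.mul_apply, hVΩ']
      rw [this]
      exact (V.continuous.tendsto ζ).comp hfΩ
    · have : (fun n => (star (V * f n * star V)) 𝔐.Ω) = fun n => V ((star (f n)) 𝔐.Ω) := by
        funext n; simp [star_mul, star_star, ContinuousLinearMap.mul_apply, hVΩ']
      rw [this]
      exact (V.continuous.tendsto ζ').comp hf'
  · refine ⟨hVM v hvM, ?_, ?_, ?_, ?_⟩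
    · -- positivity
      intro y hy
      have hy' := hC y hy
      have e1 : V ((star V * y * V) 𝔐.Ω) = y 𝔐.Ω := by
        simp [ContinuousLinearMap.mul_apply, hVΩ, hVV']
      have e2 : V ((star V * y * V) η) = y (V η) := by
        simp [ContinuousLinearMap.mul_apply, hVV']
      rw [← e1, ← e2, hinner]
      exact hpos _ hy'
    · -- L_{Vζ} = α(v) L_{Vη} on the core
      intro y hy
      have hy' := hC y hy
      have e3 : V ((star V * y * V) ζ) = y (V ζ) := by
        simp [ContinuousLinearMap.mul_apply, hVV']
      rw [← e3, heq _ hy']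
      simp only [ContinuousLinearMap.mul_apply]
    · -- idempotency of the support projection
      have hp : ∀ w : K, (star v) (v ((star v) (v w))) = (star v) (v w) := by
        intro w
        have := congrArg (fun A : K →L[ℂ] K => A w) hidem
        simpa [ContinuousLinearMap.mul_apply] using this
      show _ = _
      ext w
      simp only [ContinuousLinearMap.mul_apply, star_mul, star_star]
      simp only [hVV]
      exact congrArg V (hp _)
    · -- support condition
      have happ : ∀ w : K,
          (star (V * v * star V) * (V * v * star V)) w = V ((star v * v) ((star V) w)) := by
        intro w
        simp only [star_mul, star_star, ContinuousLinearMap.mul_apply, hVV]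
      set S : Set K := {u : K | ∃ y ∈ 𝔐.M.commutant, y η = u} with hS
      have hTS : {u : K | ∃ y ∈ 𝔐.M.commutant, y (V η) = u} = ⇑V '' S := by
        ext u
        constructor
        · rintro ⟨y, hy, rfl⟩
          refine ⟨(star V * y * V) η, ⟨_, hC y hy, rfl⟩, ?_⟩
          simp [ContinuousLinearMap.mul_apply, hVV']
        · rintro ⟨u, ⟨y, hy, rfl⟩, rfl⟩
          exact ⟨V * y * star V, hC' y hy, by simp [ContinuousLinearMap.mul_apply, hVV]⟩
      have himg : (⇑(star V) : K → K) '' (⇑V '' S) = S := by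
        ext u
        constructor
        · rintro ⟨_, ⟨s, hs, rfl⟩, rfl⟩; simpa [hVV] using hs
        · intro hu; exact ⟨V u, ⟨u, hu, rfl⟩, hVV u⟩
      have hclos : ∀ w : K, w ∈ closure (⇑V '' S) ↔ (star V) w ∈ closure S := by
        intro w
        constructor
        · intro hw
          have h2 := image_closure_subset_closure_image
            (f := ((star V : K →L[ℂ] K) : K → K)) (s := V '' S)
            (star V : K →L[ℂ] K).continuous ⟨w, hw, rfl⟩
          rwa [himg] at h2
        · intro hw
          exact image_closure_subset_closure_image (f := (V : K → K)) (s := S)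
            V.continuous ⟨(star V) w, hw, hVV' w⟩
      intro w
      rw [happ w, hTS]
      constructor
      · intro hw
        have h3 : (star v * v) ((star V) w) = (star V) w := by
          have := congrArg (fun u => (star V) u) hw
          simpa [hVV] using this
        exact (hclos w).mpr ((hsupp _).mp h3)
      · intro hw
        have h3 := (hsupp ((star V) w)).mpr ((hclos w).mp hw)
        rw [h3, hVV']

end
end

section
/- Let 𝔑 = (N,ρ,α,G) be a W*-dynamical system. If α_g(x) → ρ(x)1_N in the weak operator topology as g → ∞ (along complements of compact subsets of G) for every x ∈ N, then the action α is mixing, i.e. the unitary representation g ↦ U_g on L²(N,ρ) ⊖ ℂΩ_ρ is c₀ (its matrix coefficients vanish at infinity). Conversely, if ρ is a trace and the action is mixing, then α_g(x) → ρ(x)1_N in the weak operator topology as g → ∞ for every x ∈ N. -/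
open scoped InnerProductSpace ComplexInnerProductSpace ComplexOrder
open Filter

noncomputable section

/-- Auxiliary: a net of complex numbers converges if it can be uniformly approximated
by convergent nets. -/
private lemma approx_tendsto' {ι : Type} {l : Filter ι} {f : ι → ℂ} {L : ℂ}
    (h : ∀ ε : ℝ, 0 < ε → ∃ (f' : ι → ℂ) (L' : ℂ),
      Tendsto f' l (nhds L') ∧ (∀ i, ‖f i - f' i‖ ≤ ε) ∧ ‖L - L'‖ ≤ ε) :
    Tendsto f l (nhds L) := by
  rw [Metric.tendsto_nhds]
  intro ε hε
  obtain ⟨f', L', hf', hfe, hLe⟩ := h (ε/4) (by linarith)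
  filter_upwards [Metric.tendsto_nhds.1 hf' (ε/4) (by linarith)] with i hi
  have h1 : dist (f i) L ≤ dist (f i) (f' i) + dist (f' i) L' + dist L' L :=
    dist_triangle4 _ _ _ _
  have h2 : dist (f i) (f' i) ≤ ε/4 := by rw [dist_eq_norm]; exact hfe i
  have h3 : dist L' L ≤ ε/4 := by rw [dist_comm, dist_eq_norm]; exact hLe
  have h4 : dist (f' i) L' < ε/4 := hi
  linarith


/-- **Theorem (characterization of mixing).** Let `𝔑` be a `W*`-dynamical system.  If
`α_g(x) → ρ(x) 1` in the weak operator topology as `g → ∞` (along the cocompact filter)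
for every `x ∈ N`, then the action is mixing: the matrix coefficients of `g ↦ U_g` on
`L²(N, ρ) ⊖ ℂ Ω_ρ` vanish at infinity.  Conversely, if `ρ` is a trace and the action is
mixing, then `α_g(x) → ρ(x) 1` in the weak operator topology as `g → ∞` for all
`x ∈ N`. -/
theorem mixing_characterization {G : Type} [Group G] [TopologicalSpace G] [IsTopologicalGroup G]
    [LocallyCompactSpace G] [TopologicalSpace.SeparableSpace G]
    {H : Type} [NormedAddCommGroup H] [InnerProductSpace ℂ H] [CompleteSpace H]
    (𝔑 : WStar G H) :
    ((∀ x ∈ 𝔑.M, ∀ ξ η : H,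
        Filter.Tendsto (fun g : G => ⟪ξ, (𝔑.act g x) η⟫_ℂ) (Filter.cocompact G)
          (nhds (𝔑.state x * ⟪ξ, η⟫_ℂ))) →
      ∀ ξ η : H, ⟪𝔑.Ω, ξ⟫_ℂ = 0 → ⟪𝔑.Ω, η⟫_ℂ = 0 →
        Filter.Tendsto (fun g : G => ⟪η, 𝔑.U g ξ⟫_ℂ) (Filter.cocompact G) (nhds 0)) ∧
    ((∀ x ∈ 𝔑.M, ∀ y ∈ 𝔑.M, 𝔑.state (x * y) = 𝔑.state (y * x)) →
      (∀ ξ η : H, ⟪𝔑.Ω, ξ⟫_ℂ = 0 → ⟪𝔑.Ω, η⟫_ℂ = 0 →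
        Filter.Tendsto (fun g : G => ⟪η, 𝔑.U g ξ⟫_ℂ) (Filter.cocompact G) (nhds 0)) →
      ∀ x ∈ 𝔑.M, ∀ ξ η : H,
        Filter.Tendsto (fun g : G => ⟪ξ, (𝔑.act g x) η⟫_ℂ) (Filter.cocompact G)
          (nhds (𝔑.state x * ⟪ξ, η⟫_ℂ))) := by
  -- basic facts
  have hstar_left : ∀ (a : H →L[ℂ] H) (u v : H), ⟪a u, v⟫_ℂ = ⟪u, star a v⟫_ℂ := by
    intro a u v
    rw [ContinuousLinearMap.star_eq_adjoint, ContinuousLinearMap.adjoint_inner_right]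
  have hstar_right : ∀ (a : H →L[ℂ] H) (u v : H), ⟪u, a v⟫_ℂ = ⟪star a u, v⟫_ℂ := by
    intro a u v
    rw [ContinuousLinearMap.star_eq_adjoint, ContinuousLinearMap.adjoint_inner_left]
  have hUΩ' : ∀ g : G, star (𝔑.U g) 𝔑.Ω = 𝔑.Ω := by
    intro g
    have h1 : star (𝔑.U g) * 𝔑.U g = 1 := (Unitary.mem_iff.mp (𝔑.U_unitary g)).1
    calc star (𝔑.U g) 𝔑.Ω = star (𝔑.U g) (𝔑.U g 𝔑.Ω) := by rw [𝔑.U_Ω]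
      _ = (star (𝔑.U g) * 𝔑.U g) 𝔑.Ω := rfl
      _ = 𝔑.Ω := by rw [h1]; rfl
  have hUnorm : ∀ (g : G) (ζ : H), ‖𝔑.U g ζ‖ = ‖ζ‖ := fun g ζ =>
    Unitary.norm_map ⟨𝔑.U g, 𝔑.U_unitary g⟩ ζ
  have hUstarnorm : ∀ (g : G) (ζ : H), ‖star (𝔑.U g) ζ‖ = ‖ζ‖ := fun g ζ =>
    Unitary.norm_map ⟨star (𝔑.U g), Unitary.star_mem (𝔑.U_unitary g)⟩ ζ
  have hactΩ : ∀ (g : G) (x : H →L[ℂ] H), (𝔑.act g x) 𝔑.Ω = 𝔑.U g (x 𝔑.Ω) := by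
    intro g x
    show (𝔑.U g * x * star (𝔑.U g)) 𝔑.Ω = _
    rw [ContinuousLinearMap.mul_apply, ContinuousLinearMap.mul_apply, hUΩ' g]
  have hactnorm : ∀ (g : G) (x : H →L[ℂ] H) (ζ : H), ‖(𝔑.act g x) ζ‖ ≤ ‖x‖ * ‖ζ‖ := by
    intro g x ζ
    show ‖(𝔑.U g * x * star (𝔑.U g)) ζ‖ ≤ _
    rw [ContinuousLinearMap.mul_apply, ContinuousLinearMap.mul_apply, hUnorm]
    calc ‖x (star (𝔑.U g) ζ)‖ ≤ ‖x‖ * ‖star (𝔑.U g) ζ‖ := x.le_opNorm _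
      _ = ‖x‖ * ‖ζ‖ := by rw [hUstarnorm]
  have hΩΩ : ⟪𝔑.Ω, 𝔑.Ω⟫_ℂ = 1 := by
    rw [inner_self_eq_norm_sq_to_K, 𝔑.normΩ]; norm_num
  constructor
  · -- Forward: WOT convergence implies mixing
    intro hyp ξ η _hξ hη
    have hηΩ : ⟪η, 𝔑.Ω⟫_ℂ = 0 := by
      rw [← inner_conj_symm, hη, map_zero]
    apply approx_tendsto'
    intro ε hε
    have hd : (0:ℝ) < ε / (‖η‖ + 1) := by positivity
    obtain ⟨ξ', ⟨x, hx, hxΩ⟩, hdist⟩ := 𝔑.cyclic.exists_dist_lt ξ hd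
    refine ⟨fun g => ⟪η, 𝔑.U g ξ'⟫_ℂ, 0, ?_, ?_, by simpa using hε.le⟩
    · have hfun : (fun g : G => ⟪η, 𝔑.U g ξ'⟫_ℂ)
          = fun g : G => ⟪η, (𝔑.act g x) 𝔑.Ω⟫_ℂ := by
        funext g; rw [hactΩ, hxΩ]
      rw [hfun]
      have h0 := hyp x hx η 𝔑.Ω
      rw [hηΩ, mul_zero] at h0
      exact h0
    · intro g
      have hsub : ⟪η, 𝔑.U g ξ⟫_ℂ - ⟪η, 𝔑.U g ξ'⟫_ℂ = ⟪η, 𝔑.U g (ξ - ξ')⟫_ℂ := by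
        rw [map_sub, inner_sub_right]
      rw [hsub]
      have hle : ‖ξ - ξ'‖ ≤ ε / (‖η‖ + 1) := by
        rw [← dist_eq_norm]; exact le_of_lt hdist
      calc ‖⟪η, 𝔑.U g (ξ - ξ')⟫_ℂ‖ ≤ ‖η‖ * ‖𝔑.U g (ξ - ξ')‖ := norm_inner_le_norm _ _
        _ = ‖η‖ * ‖ξ - ξ'‖ := by rw [hUnorm]
        _ ≤ ‖η‖ * (ε / (‖η‖ + 1)) :=
            mul_le_mul_of_nonneg_left hle (norm_nonneg _)
        _ ≤ (‖η‖ + 1) * (ε / (‖η‖ + 1)) := by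
            apply mul_le_mul_of_nonneg_right (by linarith) (le_of_lt hd)
        _ = ε := by field_simp
  · -- Converse: trace + mixing implies WOT convergence
    intro htr hmix x hx ξ η
    apply approx_tendsto'
    intro ε hε
    set K : ℝ := (‖x‖ + 1) * (‖ξ‖ + ‖η‖ + 2) with hKdef
    have hKpos : 0 < K := by positivity
    set δ : ℝ := min 1 (ε / K) with hδdef
    have hδpos : 0 < δ := lt_min one_pos (by positivity)
    have hδ1 : δ ≤ 1 := min_le_left _ _
    have hδK : K * δ ≤ ε := by
      have : δ ≤ ε / K := min_le_right _ _
      calc K * δ ≤ K * (ε / K) := mul_le_mul_of_nonneg_left this (le_of_lt hKpos)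
        _ = ε := by rw [mul_comm, div_mul_cancel₀ ε hKpos.ne']
    obtain ⟨ξ', ⟨a, ha, haΩ⟩, hda⟩ := 𝔑.cyclic.exists_dist_lt ξ hδpos
    obtain ⟨η', ⟨b, hb, hbΩ⟩, hdb⟩ := 𝔑.cyclic.exists_dist_lt η hδpos
    have hea : ‖ξ - a 𝔑.Ω‖ ≤ δ := by
      rw [haΩ, ← dist_eq_norm]; exact le_of_lt hda
    have heb : ‖η - b 𝔑.Ω‖ ≤ δ := by
      rw [hbΩ, ← dist_eq_norm]; exact le_of_lt hdb
    have haΩnorm : ‖a 𝔑.Ω‖ ≤ ‖ξ‖ + 1 := by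
      calc ‖a 𝔑.Ω‖ = ‖ξ - (ξ - a 𝔑.Ω)‖ := by rw [sub_sub_cancel]
        _ ≤ ‖ξ‖ + ‖ξ - a 𝔑.Ω‖ := norm_sub_le _ _
        _ ≤ ‖ξ‖ + 1 := by linarith
    set c : H →L[ℂ] H := a * star b with hcdef
    have hc : c ∈ 𝔑.M := mul_mem ha (star_mem hb)
    -- key identity
    have hkey : ∀ g : G, ⟪a 𝔑.Ω, (𝔑.act g x) (b 𝔑.Ω)⟫_ℂ = ⟪c 𝔑.Ω, 𝔑.U g (x 𝔑.Ω)⟫_ℂ := by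
      intro g
      have hy : 𝔑.act g x ∈ 𝔑.M := 𝔑.U_mem g x hx
      calc ⟪a 𝔑.Ω, (𝔑.act g x) (b 𝔑.Ω)⟫_ℂ
          = ⟪𝔑.Ω, ((star a * 𝔑.act g x) * b) 𝔑.Ω⟫_ℂ := by
            rw [hstar_left]; rfl
        _ = 𝔑.state ((star a * 𝔑.act g x) * b) := rfl
        _ = 𝔑.state (b * (star a * 𝔑.act g x)) :=
            htr _ (mul_mem (star_mem ha) hy) b hb
        _ = ⟪𝔑.Ω, (b * star a) ((𝔑.act g x) 𝔑.Ω)⟫_ℂ := rfl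
        _ = ⟪star (b * star a) 𝔑.Ω, (𝔑.act g x) 𝔑.Ω⟫_ℂ := by rw [hstar_right]
        _ = ⟪c 𝔑.Ω, 𝔑.U g (x 𝔑.Ω)⟫_ℂ := by
            rw [star_mul, star_star, ← hcdef, hactΩ]
    -- the scalar `conj (state c) = ⟪aΩ, bΩ⟫`
    have hq : (starRingEnd ℂ) (𝔑.state c) = ⟪a 𝔑.Ω, b 𝔑.Ω⟫_ℂ := by
      have h1 : ⟪a 𝔑.Ω, b 𝔑.Ω⟫_ℂ = 𝔑.state (star a * b) := by
        rw [hstar_left]; rfl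
      have h2 : (starRingEnd ℂ) (𝔑.state c) = 𝔑.state (star c) := by
        show (starRingEnd ℂ) ⟪𝔑.Ω, c 𝔑.Ω⟫_ℂ = ⟪𝔑.Ω, star c 𝔑.Ω⟫_ℂ
        rw [inner_conj_symm, hstar_left]
      rw [h2, h1, hcdef, star_mul, star_star]
      exact (htr (star a) (star_mem ha) b hb).symm
    -- orthogonal decompositions
    set p : ℂ := 𝔑.state x with hpdef
    set q : ℂ := 𝔑.state c with hqdef
    set ζ : H := x 𝔑.Ω - p • 𝔑.Ω with hζdef
    set η₀ : H := c 𝔑.Ω - q • 𝔑.Ω with hη₀def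
    have hζ : ⟪𝔑.Ω, ζ⟫_ℂ = 0 := by
      rw [hζdef, inner_sub_right, inner_smul_right, hΩΩ, mul_one]
      show 𝔑.state x - p = 0
      rw [hpdef]; ring
    have hη₀ : ⟪𝔑.Ω, η₀⟫_ℂ = 0 := by
      rw [hη₀def, inner_sub_right, inner_smul_right, hΩΩ, mul_one]
      show 𝔑.state c - q = 0
      rw [hqdef]; ring
    have hexp : ∀ g : G, ⟪c 𝔑.Ω, 𝔑.U g (x 𝔑.Ω)⟫_ℂ
        = (starRingEnd ℂ) q * p + ⟪η₀, 𝔑.U g ζ⟫_ℂ := by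
      intro g
      have hxΩ : x 𝔑.Ω = p • 𝔑.Ω + ζ := by rw [hζdef]; abel
      have hcΩ : c 𝔑.Ω = q • 𝔑.Ω + η₀ := by rw [hη₀def]; abel
      have hUζ : ⟪𝔑.Ω, 𝔑.U g ζ⟫_ℂ = 0 := by
        rw [hstar_right, hUΩ' g, hζ]
      have hη₀Ω : ⟪η₀, 𝔑.Ω⟫_ℂ = 0 := by
        rw [← inner_conj_symm, hη₀, map_zero]
      rw [hxΩ, hcΩ, map_add, map_smul, 𝔑.U_Ω]
      rw [inner_add_left, inner_add_right, inner_add_right,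
        inner_smul_left, inner_smul_left, inner_smul_right, inner_smul_right,
        hΩΩ, hUζ, hη₀Ω]
      ring
    refine ⟨fun g => ⟪a 𝔑.Ω, (𝔑.act g x) (b 𝔑.Ω)⟫_ℂ, 𝔑.state x * ⟪a 𝔑.Ω, b 𝔑.Ω⟫_ℂ,
      ?_, ?_, ?_⟩
    · -- convergence of approximating net
      have hfun : (fun g : G => ⟪a 𝔑.Ω, (𝔑.act g x) (b 𝔑.Ω)⟫_ℂ)
          = fun g : G => (starRingEnd ℂ) q * p + ⟪η₀, 𝔑.U g ζ⟫_ℂ := by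
        funext g; rw [hkey g, hexp g]
      rw [hfun]
      have hL : 𝔑.state x * ⟪a 𝔑.Ω, b 𝔑.Ω⟫_ℂ = (starRingEnd ℂ) q * p + 0 := by
        rw [add_zero, ← hpdef, hqdef, hq]; ring
      rw [hL]
      exact tendsto_const_nhds.add (hmix ζ η₀ hζ hη₀)
    · -- uniform approximation of the net
      intro g
      set T := 𝔑.act g x with hTdef
      have hsplit : ⟪ξ, T η⟫_ℂ - ⟪a 𝔑.Ω, T (b 𝔑.Ω)⟫_ℂ
          = ⟪ξ - a 𝔑.Ω, T η⟫_ℂ + ⟪a 𝔑.Ω, T (η - b 𝔑.Ω)⟫_ℂ := by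
        rw [inner_sub_left, map_sub, inner_sub_right]; ring
      rw [hsplit]
      have b1 : ‖⟪ξ - a 𝔑.Ω, T η⟫_ℂ‖ ≤ δ * (‖x‖ * ‖η‖) := by
        calc ‖⟪ξ - a 𝔑.Ω, T η⟫_ℂ‖ ≤ ‖ξ - a 𝔑.Ω‖ * ‖T η‖ := norm_inner_le_norm _ _
          _ ≤ δ * (‖x‖ * ‖η‖) :=
            mul_le_mul hea (hactnorm g x η) (norm_nonneg _) (le_of_lt hδpos)
      have b2 : ‖⟪a 𝔑.Ω, T (η - b 𝔑.Ω)⟫_ℂ‖ ≤ (‖ξ‖ + 1) * (‖x‖ * δ) := by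
        calc ‖⟪a 𝔑.Ω, T (η - b 𝔑.Ω)⟫_ℂ‖ ≤ ‖a 𝔑.Ω‖ * ‖T (η - b 𝔑.Ω)‖ :=
              norm_inner_le_norm _ _
          _ ≤ (‖ξ‖ + 1) * (‖x‖ * δ) := by
              apply mul_le_mul haΩnorm _ (norm_nonneg _) (by positivity)
              calc ‖T (η - b 𝔑.Ω)‖ ≤ ‖x‖ * ‖η - b 𝔑.Ω‖ := hactnorm g x _
                _ ≤ ‖x‖ * δ := mul_le_mul_of_nonneg_left heb (norm_nonneg _)
      calc ‖⟪ξ - a 𝔑.Ω, T η⟫_ℂ + ⟪a 𝔑.Ω, T (η - b 𝔑.Ω)⟫_ℂ‖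
          ≤ ‖⟪ξ - a 𝔑.Ω, T η⟫_ℂ‖ + ‖⟪a 𝔑.Ω, T (η - b 𝔑.Ω)⟫_ℂ‖ := norm_add_le _ _
        _ ≤ δ * (‖x‖ * ‖η‖) + (‖ξ‖ + 1) * (‖x‖ * δ) := add_le_add b1 b2
        _ ≤ K * δ := by
            rw [hKdef]
            nlinarith [norm_nonneg x, norm_nonneg ξ, norm_nonneg η, hδpos.le]
        _ ≤ ε := hδK
    · -- approximation of the limit
      have hsx : ‖𝔑.state x‖ ≤ ‖x‖ := by
        calc ‖𝔑.state x‖ ≤ ‖𝔑.Ω‖ * ‖x 𝔑.Ω‖ := norm_inner_le_norm _ _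
          _ ≤ ‖𝔑.Ω‖ * (‖x‖ * ‖𝔑.Ω‖) :=
            mul_le_mul_of_nonneg_left (x.le_opNorm _) (norm_nonneg _)
          _ = ‖x‖ := by rw [𝔑.normΩ]; ring
      have hsplit : ⟪ξ, η⟫_ℂ - ⟪a 𝔑.Ω, b 𝔑.Ω⟫_ℂ
          = ⟪ξ - a 𝔑.Ω, η⟫_ℂ + ⟪a 𝔑.Ω, η - b 𝔑.Ω⟫_ℂ := by
        rw [inner_sub_left, inner_sub_right]; ring
      have hbound : ‖⟪ξ, η⟫_ℂ - ⟪a 𝔑.Ω, b 𝔑.Ω⟫_ℂ‖ ≤ δ * ‖η‖ + (‖ξ‖ + 1) * δ := by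
        rw [hsplit]
        calc ‖⟪ξ - a 𝔑.Ω, η⟫_ℂ + ⟪a 𝔑.Ω, η - b 𝔑.Ω⟫_ℂ‖
            ≤ ‖⟪ξ - a 𝔑.Ω, η⟫_ℂ‖ + ‖⟪a 𝔑.Ω, η - b 𝔑.Ω⟫_ℂ‖ := norm_add_le _ _
          _ ≤ ‖ξ - a 𝔑.Ω‖ * ‖η‖ + ‖a 𝔑.Ω‖ * ‖η - b 𝔑.Ω‖ :=
              add_le_add (norm_inner_le_norm _ _) (norm_inner_le_norm _ _)
          _ ≤ δ * ‖η‖ + (‖ξ‖ + 1) * δ :=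
              add_le_add (mul_le_mul_of_nonneg_right hea (norm_nonneg _))
                (mul_le_mul haΩnorm heb (norm_nonneg _) (by positivity))
      calc ‖𝔑.state x * ⟪ξ, η⟫_ℂ - 𝔑.state x * ⟪a 𝔑.Ω, b 𝔑.Ω⟫_ℂ‖
          = ‖𝔑.state x‖ * ‖⟪ξ, η⟫_ℂ - ⟪a 𝔑.Ω, b 𝔑.Ω⟫_ℂ‖ := by
            rw [← mul_sub, norm_mul]
        _ ≤ ‖x‖ * (δ * ‖η‖ + (‖ξ‖ + 1) * δ) :=
            mul_le_mul hsx hbound (norm_nonneg _) (norm_nonneg _)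
        _ ≤ K * δ := by
            rw [hKdef]
            nlinarith [norm_nonneg x, norm_nonneg ξ, norm_nonneg η, hδpos.le]
        _ ≤ ε := hδK

end
end
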